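/- arXiv:1009.0689 — 9 statements merged into one kernel-verified Lean document; each statement's English description precedes it below -/
import Mathlib

section
/- Along any C^1 solution (φ, y, ρ, ρ_r, H) : I → ℝ^5 of the coupled scalar field–matter–radiation system, the quantity G(t) := 3H(t)^2 − (1/2)y(t)^2 − V(φ(t)) − ρ(t) − ρ_r(t) has derivative identically zero, hence is constant on I; in particular if the Friedmann constraint 3H^2 = (1/2)y^2 + V(φ) + ρ + ρ_r holds at one time t_0 ∈ I, it holds for all t ∈ I. -/
/-!
Differentiating `G = 3H² − y²/2 − V(φ) − ρ − ρ_r` along the flow, the Hubble friction terms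
`3Hy²`, `3γHρ`, `4Hρ_r` are exactly cancelled by `6HH'`, and the coupling term proportional to
`χ'/χ` only exchanges energy between the field and the matter, so it cancels between `yy'` and
`ρ'`. Hence `G' = 0`, and a function with zero derivative on an interval is constant.
-/

open Set

noncomputable def friedmannDefect (V φ y ρ ρr H : ℝ → ℝ) (s : ℝ) : ℝ :=
  3 * (H s)^2 - (1/2) * (y s)^2 - V (φ s) - ρ s - ρr s

theorem hasDerivAt_friedmannDefect {V φ y ρ ρr H : ℝ → ℝ} {γ v q t : ℝ}
    (hV : HasDerivAt V v (φ t))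
    (hφ : HasDerivAt φ (y t) t)
    (hy : HasDerivAt y (-3 * H t * y t - v + (1/2) * (4 - 3*γ) * ρ t * q) t)
    (hρ : HasDerivAt ρ (-3 * γ * H t * ρ t - (1/2) * (4 - 3*γ) * ρ t * y t * q) t)
    (hρr : HasDerivAt ρr (-4 * H t * ρr t) t)
    (hH : HasDerivAt H (-(1/2) * (γ * ρ t + (4/3) * ρr t + (y t)^2)) t) :
    HasDerivAt (friedmannDefect V φ y ρ ρr H) 0 t := by
  have hG := (((((hH.pow 2).const_mul 3).sub ((hy.pow 2).const_mul (1/2))).sub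
    (hV.comp t hφ)).sub hρ).sub hρr
  exact hG.congr_deriv (by ring)

theorem stmt_0_general
    (V V' χ χ' : ℝ → ℝ)
    (hV : ∀ x, HasDerivAt V (V' x) x)
    (γ a b : ℝ)
    (φ y ρ ρr H : ℝ → ℝ)
    (hφ : ∀ t ∈ Ioo a b, HasDerivAt φ (y t) t)
    (hy : ∀ t ∈ Ioo a b, HasDerivAt y
      (-3 * H t * y t - V' (φ t) + (1/2) * (4 - 3*γ) * ρ t * (χ' (φ t) / χ (φ t))) t)
    (hρ : ∀ t ∈ Ioo a b, HasDerivAt ρ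
      (-3 * γ * H t * ρ t - (1/2) * (4 - 3*γ) * ρ t * y t * (χ' (φ t) / χ (φ t))) t)
    (hρr : ∀ t ∈ Ioo a b, HasDerivAt ρr (-4 * H t * ρr t) t)
    (hH : ∀ t ∈ Ioo a b, HasDerivAt H
      (-(1/2) * (γ * ρ t + (4/3) * ρr t + (y t)^2)) t) :
    (∀ t ∈ Ioo a b, HasDerivAt
        (fun s => 3 * (H s)^2 - (1/2) * (y s)^2 - V (φ s) - ρ s - ρr s) 0 t)
    ∧ (∀ t ∈ Ioo a b, ∀ s ∈ Ioo a b,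
        3 * (H t)^2 - (1/2) * (y t)^2 - V (φ t) - ρ t - ρr t
          = 3 * (H s)^2 - (1/2) * (y s)^2 - V (φ s) - ρ s - ρr s)
    ∧ (∀ t0 ∈ Ioo a b,
        3 * (H t0)^2 = (1/2) * (y t0)^2 + V (φ t0) + ρ t0 + ρr t0 →
        ∀ t ∈ Ioo a b,
          3 * (H t)^2 = (1/2) * (y t)^2 + V (φ t) + ρ t + ρr t) := by
  have hG : ∀ t ∈ Ioo a b, HasDerivAt (friedmannDefect V φ y ρ ρr H) 0 t := fun t ht =>
    hasDerivAt_friedmannDefect (hV (φ t)) (hφ t ht) (hy t ht) (hρ t ht) (hρr t ht) (hH t ht)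
  have hconst : ∀ t ∈ Ioo a b, ∀ s ∈ Ioo a b,
      friedmannDefect V φ y ρ ρr H t = friedmannDefect V φ y ρ ρr H s := fun t ht s hs =>
    isOpen_Ioo.is_const_of_deriv_eq_zero isPreconnected_Ioo
      (fun x hx => (hG x hx).differentiableAt.differentiableWithinAt)
      (fun x hx => (hG x hx).deriv) ht hs
  refine ⟨hG, hconst, fun t0 ht0 hfried t ht => ?_⟩
  have h := hconst t ht t0 ht0
  unfold friedmannDefect at h
  linarith

/-- Along any C¹ solution of the coupled scalar field–matter–radiation system,
the quantity `G(t) = 3H² − y²/2 − V(φ) − ρ − ρ_r` has derivative identically zero,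
hence is constant on the interval; in particular, if the Friedmann constraint holds
at one time, it holds for all times. -/
theorem stmt_0
    (V V' χ χ' : ℝ → ℝ)
    (hV : ∀ x, HasDerivAt V (V' x) x)
    (hχ : ∀ x, HasDerivAt χ (χ' x) x)
    (hχpos : ∀ x, 0 < χ x)
    (γ a b : ℝ)
    (φ y ρ ρr H : ℝ → ℝ)
    (hφ : ∀ t ∈ Ioo a b, HasDerivAt φ (y t) t)
    (hy : ∀ t ∈ Ioo a b, HasDerivAt y
      (-3 * H t * y t - V' (φ t) + (1/2) * (4 - 3*γ) * ρ t * (χ' (φ t) / χ (φ t))) t)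
    (hρ : ∀ t ∈ Ioo a b, HasDerivAt ρ
      (-3 * γ * H t * ρ t - (1/2) * (4 - 3*γ) * ρ t * y t * (χ' (φ t) / χ (φ t))) t)
    (hρr : ∀ t ∈ Ioo a b, HasDerivAt ρr (-4 * H t * ρr t) t)
    (hH : ∀ t ∈ Ioo a b, HasDerivAt H
      (-(1/2) * (γ * ρ t + (4/3) * ρr t + (y t)^2)) t) :
    (∀ t ∈ Ioo a b, HasDerivAt
        (fun s => 3 * (H s)^2 - (1/2) * (y s)^2 - V (φ s) - ρ s - ρr s) 0 t)
    ∧ (∀ t ∈ Ioo a b, ∀ s ∈ Ioo a b,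
        3 * (H t)^2 - (1/2) * (y t)^2 - V (φ t) - ρ t - ρr t
          = 3 * (H s)^2 - (1/2) * (y s)^2 - V (φ s) - ρ s - ρr s)
    ∧ (∀ t0 ∈ Ioo a b,
        3 * (H t0)^2 = (1/2) * (y t0)^2 + V (φ t0) + ρ t0 + ρr t0 →
        ∀ t ∈ Ioo a b,
          3 * (H t)^2 = (1/2) * (y t)^2 + V (φ t) + ρ t + ρr t) :=
  stmt_0_general V V' χ χ' hV γ a b φ y ρ ρr H hφ hy hρ hρr hH
end

section
/- (Proposition 3.4) The set Σ_0 := {(σ_1, σ_2, σ_3, σ_4) ∈ ℝ^4 : σ_2^2 + σ_3^2 + σ_4^2 = 1, σ_3 ≥ 0, σ_4 ≥ 0}, equipped with the subspace topology from ℝ^4, is a topological manifold with boundary: for every point p ∈ Σ_0 there exist a positive integer m (depending on p), an open neighborhood U of p in Σ_0, and a homeomorphism from U onto an open subset of the half-space ℍ^m = {x ∈ ℝ^m : x_m ≥ 0}. -/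
/-!
Write `Σ₀ = ℝ × Q` with `Q` the quarter `{σ₃, σ₄ ≥ 0}` of the unit sphere in `(σ₂, σ₃, σ₄)`, and
use the symmetries `σ₂ ↦ -σ₂` and `σ₃ ↔ σ₄`. Where `σ₄ > 0`, `Q` is the graph of
`σ₄ = √(1 - σ₂² - σ₃²)` over a half-disc with boundary `σ₃ = 0`; up to symmetry this covers
`σ₂ = 0`. Where `σ₂ > 0`, `Q` has a corner at the pole `σ₃ = σ₄ = 0`; there
`z = σ₃ + iσ₄ ↦ z² = (σ₃² - σ₄², 2σ₃σ₄)` opens the quadrant onto the upper half-plane, `σ₂` is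
recovered as `√(1 - |z²|)`, and the inverse is the principal square root in real coordinates.
-/

open Set

/-- The set `Σ₀ = {(σ₁,σ₂,σ₃,σ₄) : σ₂² + σ₃² + σ₄² = 1, σ₃ ≥ 0, σ₄ ≥ 0}` with the
subspace topology of ℝ⁴. -/
def Sigma0 : Set (ℝ × ℝ × ℝ × ℝ) :=
  {σ | σ.2.1^2 + σ.2.2.1^2 + σ.2.2.2^2 = 1 ∧ 0 ≤ σ.2.2.1 ∧ 0 ≤ σ.2.2.2}

def HasLocalChart {X : Type*} [TopologicalSpace X] (H : Type*) [TopologicalSpace H] (p : X) :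
    Prop :=
  ∃ U : Set X, IsOpen U ∧ p ∈ U ∧ ∃ W : Set H, IsOpen W ∧ Nonempty (U ≃ₜ W)

section LocalChart

variable {X Y H : Type*} [TopologicalSpace X] [TopologicalSpace Y] [TopologicalSpace H]

theorem HasLocalChart.of_map (e : X ≃ₜ Y) {p : X} (h : HasLocalChart H (e p)) :
    HasLocalChart H p := by
  obtain ⟨U, hU, hpU, W, hW, ⟨φ⟩⟩ := h
  exact ⟨e ⁻¹' U, hU.preimage e.continuous, hpU, W, hW,
    ⟨(e.image _).trans ((Homeomorph.setCongr (e.image_preimage U)).trans φ)⟩⟩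

theorem hasLocalChart_of_invOn {s V : Set X} {t W : Set Y} (hV : IsOpen V) (hW : IsOpen W)
    {f : X → Y} {g : Y → X} (hf : ContinuousOn f (s ∩ V)) (hg : ContinuousOn g (t ∩ W))
    (hfst : MapsTo f (s ∩ V) (t ∩ W)) (hgts : MapsTo g (t ∩ W) (s ∩ V))
    (hinv : InvOn g f (s ∩ V) (t ∩ W)) {p : s} (hp : p.1 ∈ V) : HasLocalChart t p := by
  refine ⟨Subtype.val ⁻¹' V, hV.preimage continuous_subtype_val, hp,
    Subtype.val ⁻¹' W, hW.preimage continuous_subtype_val, ⟨?_⟩⟩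
  have hsV : ∀ x : (Subtype.val ⁻¹' V : Set s), x.1.1 ∈ s ∩ V := fun x => ⟨x.1.2, x.2⟩
  have htW : ∀ y : (Subtype.val ⁻¹' W : Set t), y.1.1 ∈ t ∩ W := fun y => ⟨y.1.2, y.2⟩
  exact
    { toFun x := ⟨⟨f x.1.1, (hfst (hsV x)).1⟩, (hfst (hsV x)).2⟩
      invFun y := ⟨⟨g y.1.1, (hgts (htW y)).1⟩, (hgts (htW y)).2⟩
      left_inv x := Subtype.ext (Subtype.ext (hinv.1 (hsV x)))
      right_inv y := Subtype.ext (Subtype.ext (hinv.2 (htW y)))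
      continuous_toFun := (hf.comp_continuous (by fun_prop) hsV).subtype_mk _ |>.subtype_mk _
      continuous_invFun := (hg.comp_continuous (by fun_prop) htW).subtype_mk _ |>.subtype_mk _ }

end LocalChart

namespace Sigma0

def swapSigma34 : Sigma0 ≃ₜ Sigma0 :=
  (Homeomorph.prodCongr (.refl ℝ) (.prodCongr (.refl ℝ) (.prodComm ℝ ℝ))).subtype fun σ => by
    simp [Sigma0, add_right_comm _ (σ.2.2.1 ^ 2), and_comm]

def reflectSigma2 : Sigma0 ≃ₜ Sigma0 :=
  (Homeomorph.prodCongr (.refl ℝ) (.prodCongr (.neg ℝ) (.refl (ℝ × ℝ)))).subtype fun σ => by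
    simp [Sigma0]

end Sigma0

theorem sqrt_sq_sub_sq_sq_add_two_mul_mul_sq (c d : ℝ) :
    √((c ^ 2 - d ^ 2) ^ 2 + (2 * c * d) ^ 2) = c ^ 2 + d ^ 2 := by
  rw [show (c ^ 2 - d ^ 2) ^ 2 + (2 * c * d) ^ 2 = (c ^ 2 + d ^ 2) ^ 2 by ring]
  exact Real.sqrt_sq (by positivity)

theorem abs_le_sqrt_sq_add_sq (u v : ℝ) : |u| ≤ √(u ^ 2 + v ^ 2) :=
  Real.abs_le_sqrt (le_add_of_nonneg_right (sq_nonneg v))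

theorem sq_sqrt_half_sqrt_add (u v : ℝ) :
    √((√(u ^ 2 + v ^ 2) + u) / 2) ^ 2 = (√(u ^ 2 + v ^ 2) + u) / 2 :=
  Real.sq_sqrt (by linarith [(abs_le.mp (abs_le_sqrt_sq_add_sq u v)).1])

theorem sq_sqrt_half_sqrt_sub (u v : ℝ) :
    √((√(u ^ 2 + v ^ 2) - u) / 2) ^ 2 = (√(u ^ 2 + v ^ 2) - u) / 2 :=
  Real.sq_sqrt (by linarith [(abs_le.mp (abs_le_sqrt_sq_add_sq u v)).2])

theorem two_mul_sqrt_half_sqrt_add_mul_sqrt_half_sqrt_sub (u v : ℝ) :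
    2 * √((√(u ^ 2 + v ^ 2) + u) / 2) * √((√(u ^ 2 + v ^ 2) - u) / 2) = |v| := by
  have hr : √(u ^ 2 + v ^ 2) ^ 2 = u ^ 2 + v ^ 2 := Real.sq_sqrt (by positivity)
  have hprod : (√(u ^ 2 + v ^ 2) + u) / 2 * ((√(u ^ 2 + v ^ 2) - u) / 2) = (v / 2) ^ 2 := by
    linear_combination hr / 4
  rw [mul_assoc, ← Real.sqrt_mul' _ (by rw [← sq_sqrt_half_sqrt_sub u v]; positivity), hprod,
    Real.sqrt_sq_eq_abs, abs_div, abs_two]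
  ring

local notation "E³" => EuclideanSpace ℝ (Fin 3)

namespace Sigma0

def graphChart (σ : ℝ × ℝ × ℝ × ℝ) : E³ := !₂[σ.1, σ.2.1, σ.2.2.1]

noncomputable def graphChartInv (x : E³) : ℝ × ℝ × ℝ × ℝ :=
  (x 0, x 1, x 2, √(1 - x 1 ^ 2 - x 2 ^ 2))

theorem mapsTo_graphChart : MapsTo graphChart (Sigma0 ∩ {σ | 0 < σ.2.2.2})
    ({x | 0 ≤ x 2} ∩ {x | x 1 ^ 2 + x 2 ^ 2 < 1}) := by
  rintro ⟨a, b, c, d⟩ ⟨⟨h : b ^ 2 + c ^ 2 + d ^ 2 = 1, hc : 0 ≤ c, -⟩, hd : 0 < d⟩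
  simpa [graphChart] using ⟨hc, by nlinarith⟩

theorem mapsTo_graphChartInv : MapsTo graphChartInv
    ({x | 0 ≤ x 2} ∩ {x | x 1 ^ 2 + x 2 ^ 2 < 1}) (Sigma0 ∩ {σ | 0 < σ.2.2.2}) := by
  rintro x ⟨hx : 0 ≤ x 2, hdisc : x 1 ^ 2 + x 2 ^ 2 < 1⟩
  have hpos : 0 < 1 - x 1 ^ 2 - x 2 ^ 2 := by linarith
  refine ⟨⟨?_, hx, Real.sqrt_nonneg _⟩, Real.sqrt_pos.mpr hpos⟩
  simp only [graphChartInv, Real.sq_sqrt hpos.le]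
  ring

theorem invOn_graphChart : InvOn graphChartInv graphChart (Sigma0 ∩ {σ | 0 < σ.2.2.2})
    ({x | 0 ≤ x 2} ∩ {x | x 1 ^ 2 + x 2 ^ 2 < 1}) := by
  constructor
  · rintro ⟨a, b, c, d⟩ ⟨⟨h : b ^ 2 + c ^ 2 + d ^ 2 = 1, -, hd : 0 ≤ d⟩, -⟩
    have : 1 - b ^ 2 - c ^ 2 = d ^ 2 := by linarith
    simp [graphChart, graphChartInv, this, Real.sqrt_sq hd]
  · intro x _
    ext i
    fin_cases i <;> rfl

theorem hasLocalChart_of_sigma4_pos (p : Sigma0) (hp : 0 < p.1.2.2.2) :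
    HasLocalChart {x : E³ | 0 ≤ x 2} p :=
  hasLocalChart_of_invOn (isOpen_lt continuous_const (by fun_prop))
    (isOpen_lt (by fun_prop) continuous_const) (by unfold graphChart; fun_prop)
    (by unfold graphChartInv; fun_prop) mapsTo_graphChart mapsTo_graphChartInv invOn_graphChart hp

def poleChart (σ : ℝ × ℝ × ℝ × ℝ) : E³ :=
  !₂[σ.1, σ.2.2.1 ^ 2 - σ.2.2.2 ^ 2, 2 * σ.2.2.1 * σ.2.2.2]

noncomputable def poleChartInv (x : E³) : ℝ × ℝ × ℝ × ℝ :=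
  (x 0, √(1 - √(x 1 ^ 2 + x 2 ^ 2)), √((√(x 1 ^ 2 + x 2 ^ 2) + x 1) / 2),
    √((√(x 1 ^ 2 + x 2 ^ 2) - x 1) / 2))

theorem mapsTo_poleChart : MapsTo poleChart (Sigma0 ∩ {σ | 0 < σ.2.1})
    ({x | 0 ≤ x 2} ∩ {x | x 1 ^ 2 + x 2 ^ 2 < 1}) := by
  rintro ⟨a, b, c, d⟩ ⟨⟨h : b ^ 2 + c ^ 2 + d ^ 2 = 1, hc : 0 ≤ c, hd : 0 ≤ d⟩, hb : 0 < b⟩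
  have hcd : c ^ 2 + d ^ 2 < 1 := by nlinarith
  simpa [poleChart] using ⟨by positivity, by nlinarith [sq_nonneg (c ^ 2 + d ^ 2)]⟩

theorem mapsTo_poleChartInv : MapsTo poleChartInv
    ({x | 0 ≤ x 2} ∩ {x | x 1 ^ 2 + x 2 ^ 2 < 1}) (Sigma0 ∩ {σ | 0 < σ.2.1}) := by
  rintro x ⟨-, hdisc : x 1 ^ 2 + x 2 ^ 2 < 1⟩
  have hr : √(x 1 ^ 2 + x 2 ^ 2) < 1 := (Real.sqrt_lt' one_pos).mpr (by simpa using hdisc)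
  refine ⟨⟨?_, Real.sqrt_nonneg _, Real.sqrt_nonneg _⟩, Real.sqrt_pos.mpr (by linarith)⟩
  simp only [poleChartInv, sq_sqrt_half_sqrt_add, sq_sqrt_half_sqrt_sub,
    Real.sq_sqrt (by linarith : 0 ≤ 1 - √(x 1 ^ 2 + x 2 ^ 2))]
  ring

theorem invOn_poleChart : InvOn poleChartInv poleChart (Sigma0 ∩ {σ | 0 < σ.2.1})
    ({x | 0 ≤ x 2} ∩ {x | x 1 ^ 2 + x 2 ^ 2 < 1}) := by
  constructor
  · rintro ⟨a, b, c, d⟩ ⟨⟨h : b ^ 2 + c ^ 2 + d ^ 2 = 1, hc : 0 ≤ c, hd : 0 ≤ d⟩, hb : 0 < b⟩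
    have hr := sqrt_sq_sub_sq_sq_add_two_mul_mul_sq c d
    have hb' : 1 - (c ^ 2 + d ^ 2) = b ^ 2 := by linarith
    have hc' : (c ^ 2 + d ^ 2 + (c ^ 2 - d ^ 2)) / 2 = c ^ 2 := by ring
    have hd' : (c ^ 2 + d ^ 2 - (c ^ 2 - d ^ 2)) / 2 = d ^ 2 := by ring
    simp only [poleChart, poleChartInv, PiLp.toLp_apply, Matrix.cons_val_zero, Matrix.cons_val_one,
      Matrix.cons_val_two, Matrix.head_cons, Matrix.tail_cons, hr, hb', hc', hd',
      Real.sqrt_sq hb.le, Real.sqrt_sq hc, Real.sqrt_sq hd]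
  · rintro x ⟨hx : 0 ≤ x 2, -⟩
    simp only [poleChart, poleChartInv, sq_sqrt_half_sqrt_add, sq_sqrt_half_sqrt_sub,
      two_mul_sqrt_half_sqrt_add_mul_sqrt_half_sqrt_sub, abs_of_nonneg hx]
    ext i
    fin_cases i
    · rfl
    · simp only [Fin.mk_one, Matrix.cons_val_one, Matrix.cons_val_zero]
      ring
    · rfl

theorem hasLocalChart_of_sigma2_pos (p : Sigma0) (hp : 0 < p.1.2.1) :
    HasLocalChart {x : E³ | 0 ≤ x 2} p :=
  hasLocalChart_of_invOn (isOpen_lt continuous_const (by fun_prop))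
    (isOpen_lt (by fun_prop) continuous_const) (by unfold poleChart; fun_prop)
    (by unfold poleChartInv; fun_prop) mapsTo_poleChart mapsTo_poleChartInv invOn_poleChart hp

theorem hasLocalChart (p : Sigma0) : HasLocalChart {x : E³ | 0 ≤ x 2} p := by
  obtain ⟨h, hc, hd⟩ := p.2
  rcases lt_trichotomy p.1.2.1 0 with hb | hb | hb
  · exact .of_map reflectSigma2 (hasLocalChart_of_sigma2_pos _ (neg_pos.mpr hb))
  · rcases hd.lt_or_eq with hd | hd
    · exact hasLocalChart_of_sigma4_pos p hd
    · have hc_pos : 0 < p.1.2.2.1 := by nlinarith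
      exact .of_map swapSigma34 (hasLocalChart_of_sigma4_pos _ hc_pos)
  · exact hasLocalChart_of_sigma2_pos p hb

end Sigma0

/-- (Proposition 3.4) `Σ₀` is a topological manifold with boundary: every point has an
open neighborhood homeomorphic to an open subset of some half-space
`ℍ^m = {x ∈ ℝ^m : x_m ≥ 0}`. -/
theorem stmt_4 :
    ∀ p : Sigma0, ∃ (m : ℕ) (hm : 0 < m) (U : Set Sigma0),
      IsOpen U ∧ p ∈ U ∧
      ∃ W : Set {x : EuclideanSpace ℝ (Fin m) // 0 ≤ x ⟨m - 1, Nat.sub_lt hm Nat.one_pos⟩},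
        IsOpen W ∧ Nonempty (U ≃ₜ W) :=
  fun p => ⟨3, three_pos, Sigma0.hasLocalChart p⟩
end

section
/- (Proposition 3.5) The set Σ_+ := {(σ_1, σ_2, σ_3, σ_4, σ_5) ∈ ℝ^5 : σ_2^2 + σ_3^2 + σ_4^2 + σ_5^2 = 1, σ_3 ≥ 0, σ_4 ≥ 0, σ_5 > 0}, equipped with the subspace topology from ℝ^5, is a topological manifold with boundary: for every point p ∈ Σ_+ there exist a positive integer m (depending on p), an open neighborhood U of p in Σ_+, and a homeomorphism from U onto an open subset of the half-space ℍ^m = {x ∈ ℝ^m : x_m ≥ 0}. -/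
open Set

/-- The set `Σ₊ = {(σ₁,σ₂,σ₃,σ₄,σ₅) : σ₂² + σ₃² + σ₄² + σ₅² = 1, σ₃ ≥ 0, σ₄ ≥ 0, σ₅ > 0}`
with the subspace topology of ℝ⁵. -/
def SigmaPlus : Set (ℝ × ℝ × ℝ × ℝ × ℝ) :=
  {σ | σ.2.1^2 + σ.2.2.1^2 + σ.2.2.2.1^2 + σ.2.2.2.2^2 = 1 ∧
    0 ≤ σ.2.2.1 ∧ 0 ≤ σ.2.2.2.1 ∧ 0 < σ.2.2.2.2}

/-!
Since `σ₅ > 0` is determined by the other coordinates, `Σ₊` is the graph of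
`√(1 - σ₂² - σ₃² - σ₄²)` over an open subset of `ℝ² × [0,∞)²`. The closed quadrant
`[0,∞)²` is folded onto the closed half-plane by `(c, d) ↦ (c - d, c d)`: the pair `(c, -d)`
is recovered as the roots of `t² - u t - v`, i.e. `c, d = (√(u² + 4v) ± u) / 2`. Because
`c² + d² = (c - d)² + 2 c d`, this yields a single global chart of `Σ₊` onto an open subset
of `ℍ⁴`.
-/

lemma sqrt_sub_sq_add_four_mul {c d : ℝ} (hc : 0 ≤ c) (hd : 0 ≤ d) :
    √((c - d) ^ 2 + 4 * (c * d)) = c + d := by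
  rw [show (c - d) ^ 2 + 4 * (c * d) = (c + d) ^ 2 by ring]
  exact Real.sqrt_sq (by positivity)

lemma abs_le_sqrt_sq_add_four_mul (u : ℝ) {v : ℝ} (hv : 0 ≤ v) : |u| ≤ √(u ^ 2 + 4 * v) := by
  rw [← Real.sqrt_sq_eq_abs]
  exact Real.sqrt_le_sqrt (by linarith)

lemma add_sqrt_div_two_mul_sqrt_sub_div_two (u : ℝ) {v : ℝ} (hv : 0 ≤ v) :
    (u + √(u ^ 2 + 4 * v)) / 2 * ((√(u ^ 2 + 4 * v) - u) / 2) = v := by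
  linear_combination Real.sq_sqrt (show 0 ≤ u ^ 2 + 4 * v by positivity) / 4

def chartTarget : Set {x : EuclideanSpace ℝ (Fin 4) // 0 ≤ x 3} :=
  {x | x.1 1 ^ 2 + x.1 2 ^ 2 + 2 * x.1 3 < 1}

noncomputable def sigmaPlusChart (σ : ℝ × ℝ × ℝ × ℝ × ℝ) : EuclideanSpace ℝ (Fin 4) :=
  !₂[σ.1, σ.2.1, σ.2.2.1 - σ.2.2.2.1, σ.2.2.1 * σ.2.2.2.1]

noncomputable def sigmaPlusChartInv (x : EuclideanSpace ℝ (Fin 4)) : ℝ × ℝ × ℝ × ℝ × ℝ :=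
  (x 0, x 1, (x 2 + √(x 2 ^ 2 + 4 * x 3)) / 2, (√(x 2 ^ 2 + 4 * x 3) - x 2) / 2,
    √(1 - x 1 ^ 2 - x 2 ^ 2 - 2 * x 3))

@[fun_prop]
lemma continuous_sigmaPlusChart : Continuous sigmaPlusChart := by
  unfold sigmaPlusChart; fun_prop

@[fun_prop]
lemma continuous_sigmaPlusChartInv : Continuous sigmaPlusChartInv := by
  unfold sigmaPlusChartInv; fun_prop

example (x : EuclideanSpace ℝ (Fin 4)) : x 3 = x ⟨4 - 1, by omega⟩ := rfl

lemma sigmaPlusChart_nonneg {σ : ℝ × ℝ × ℝ × ℝ × ℝ} (hσ : σ ∈ SigmaPlus) :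
    0 ≤ sigmaPlusChart σ 3 :=
  mul_nonneg hσ.2.1 hσ.2.2.1

lemma sigmaPlusChart_mem_chartTarget {σ : ℝ × ℝ × ℝ × ℝ × ℝ} (hσ : σ ∈ SigmaPlus) :
    ⟨sigmaPlusChart σ, sigmaPlusChart_nonneg hσ⟩ ∈ chartTarget := by
  obtain ⟨a, b, c, d, e⟩ := σ
  obtain ⟨hsum, -, -, he⟩ := hσ
  change b ^ 2 + (c - d) ^ 2 + 2 * (c * d) < 1
  nlinarith

lemma sigmaPlusChartInv_mem {x : EuclideanSpace ℝ (Fin 4)} (hx : 0 ≤ x 3)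
    (hW : x 1 ^ 2 + x 2 ^ 2 + 2 * x 3 < 1) : sigmaPlusChartInv x ∈ SigmaPlus := by
  obtain ⟨hl, hr⟩ := abs_le.mp (abs_le_sqrt_sq_add_four_mul (x 2) hx)
  have hs := Real.sq_sqrt (show 0 ≤ x 2 ^ 2 + 4 * x 3 by positivity)
  have ht : 0 < 1 - x 1 ^ 2 - x 2 ^ 2 - 2 * x 3 := by linarith
  refine ⟨?_, by change 0 ≤ (_ + _) / 2; linarith, by change 0 ≤ (_ - _) / 2; linarith,
    Real.sqrt_pos.mpr ht⟩
  change x 1 ^ 2 + ((x 2 + _) / 2) ^ 2 + ((_ - x 2) / 2) ^ 2 + √_ ^ 2 = 1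
  rw [Real.sq_sqrt ht.le]
  linear_combination hs / 2

lemma sigmaPlusChartInv_sigmaPlusChart {σ : ℝ × ℝ × ℝ × ℝ × ℝ} (hσ : σ ∈ SigmaPlus) :
    sigmaPlusChartInv (sigmaPlusChart σ) = σ := by
  obtain ⟨a, b, c, d, e⟩ := σ
  obtain ⟨hsum, hc, hd, he⟩ := hσ
  have he' : √(1 - b ^ 2 - (c - d) ^ 2 - 2 * (c * d)) = e := by
    rw [show 1 - b ^ 2 - (c - d) ^ 2 - 2 * (c * d) = e ^ 2 by linear_combination -hsum]
    exact Real.sqrt_sq he.le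
  change (a, b, (c - d + √((c - d) ^ 2 + 4 * (c * d))) / 2,
    (√((c - d) ^ 2 + 4 * (c * d)) - (c - d)) / 2, √(1 - b ^ 2 - (c - d) ^ 2 - 2 * (c * d))) = _
  rw [sqrt_sub_sq_add_four_mul hc hd, he']
  ext <;> simp only <;> ring

lemma sigmaPlusChart_sigmaPlusChartInv {x : EuclideanSpace ℝ (Fin 4)} (hx : 0 ≤ x 3) :
    sigmaPlusChart (sigmaPlusChartInv x) = x := by
  ext i
  fin_cases i
  · rfl
  · rfl
  · change (x 2 + _) / 2 - (_ - x 2) / 2 = x 2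
    ring
  · exact add_sqrt_div_two_mul_sqrt_sub_div_two (x 2) hx

noncomputable def sigmaPlusHomeomorph : SigmaPlus ≃ₜ chartTarget where
  toFun σ := ⟨⟨sigmaPlusChart σ, sigmaPlusChart_nonneg σ.2⟩, sigmaPlusChart_mem_chartTarget σ.2⟩
  invFun x := ⟨sigmaPlusChartInv x, sigmaPlusChartInv_mem x.1.2 x.2⟩
  left_inv σ := Subtype.ext (sigmaPlusChartInv_sigmaPlusChart σ.2)
  right_inv x := Subtype.ext (Subtype.ext (sigmaPlusChart_sigmaPlusChartInv x.1.2))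
  continuous_toFun := by fun_prop
  continuous_invFun := by fun_prop

lemma isOpen_chartTarget : IsOpen chartTarget :=
  isOpen_lt (by fun_prop) continuous_const

/-- (Proposition 3.5) `Σ₊` is a topological manifold with boundary: every point has an
open neighborhood homeomorphic to an open subset of some half-space
`ℍ^m = {x ∈ ℝ^m : x_m ≥ 0}`. -/
theorem stmt_5 :
    ∀ p : SigmaPlus, ∃ (m : ℕ) (hm : 0 < m) (U : Set SigmaPlus),
      IsOpen U ∧ p ∈ U ∧
      ∃ W : Set {x : EuclideanSpace ℝ (Fin m) // 0 ≤ x ⟨m - 1, Nat.sub_lt hm Nat.one_pos⟩},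
        IsOpen W ∧ Nonempty (U ≃ₜ W) := by
  intro p
  exact ⟨4, by norm_num, univ, isOpen_univ, mem_univ p, chartTarget, isOpen_chartTarget,
    ⟨(Homeomorph.Set.univ _).trans sigmaPlusHomeomorph⟩⟩
end

section
/- Let γ ∈ (0, 2) and let V, χ : ℝ → ℝ be positive C^1 functions. Let σ = (σ_1, σ_2, σ_3, σ_4, σ_5) : I → ℝ^5 be a C^1 solution of the Hubble-normalized system with σ_3(τ) > 0 and σ_4(τ) > 0 for all τ ∈ I. Then the function Z_1(τ) := (σ_3(τ)/σ_4(τ))^2 · V(σ_1(τ)) · χ(σ_1(τ))^{2 − 3γ/2} satisfies Z_1'(τ) = −γ Z_1(τ) for all τ ∈ I; in particular Z_1 is strictly monotonically decreasing. -/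
open Set

/-! `Z₁` is a product of powers of `σ₃`, `σ₄`, `V(σ₁)` and `χ(σ₁)`, so its logarithmic derivative
is the corresponding combination of theirs. In `2 (σ₃'/σ₃ − σ₄'/σ₄)` the polynomial terms cancel
down to `−γ`, leaving one `V'/V` and one `χ'/χ` term; since `σ₁' = √(2/3) σ₂`, these are cancelled
exactly by `(V'/V) σ₁'` and `(2 − 3γ/2)(χ'/χ) σ₁'`. Hence `Z₁' = −γ Z₁`, which is negative
because `Z₁ > 0`. -/

section LogDeriv

variable {f g : ℝ → ℝ} {x Lf Lg : ℝ}

theorem HasDerivAt.mul_logDeriv (hf : HasDerivAt f (f x * Lf) x) (hg : HasDerivAt g (g x * Lg) x) :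
    HasDerivAt (fun s => f s * g s) (f x * g x * (Lf + Lg)) x :=
  (hf.mul hg).congr_deriv (by ring)

theorem HasDerivAt.div_sq_logDeriv (hf : HasDerivAt f (f x * Lf) x)
    (hg : HasDerivAt g (g x * Lg) x) (hgx : g x ≠ 0) :
    HasDerivAt (fun s => (f s / g s) ^ 2) ((f x / g x) ^ 2 * (2 * (Lf - Lg))) x := by
  refine ((hf.fun_div hg hgx).fun_pow 2).congr_deriv ?_
  rw [Nat.add_one_sub_one, pow_one]
  field_simp
  ring

theorem HasDerivAt.comp_logDeriv {F F' : ℝ → ℝ} (hF : HasDerivAt F (F' (f x)) (f x))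
    (hFx : F (f x) ≠ 0) {f' : ℝ} (hf : HasDerivAt f f' x) :
    HasDerivAt (fun s => F (f s)) (F (f x) * (F' (f x) / F (f x) * f')) x := by
  refine (hF.comp x hf).congr_deriv ?_
  field_simp

theorem HasDerivAt.rpow_const_logDeriv {f' : ℝ} (hf : HasDerivAt f (f x * f') x) (hfx : 0 < f x)
    (p : ℝ) : HasDerivAt (fun s => f s ^ p) (f x ^ p * (p * f')) x := by
  refine (hf.rpow_const (p := p) (Or.inl hfx.ne')).congr_deriv ?_
  rw [Real.rpow_sub hfx, Real.rpow_one]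
  field_simp

end LogDeriv

theorem strictAntiOn_of_hasDerivAt_neg_mul_self {D : Set ℝ} (hD : Convex ℝ D) (hDo : IsOpen D)
    {f : ℝ → ℝ} {γ : ℝ} (hγ : 0 < γ) (hf : ∀ x ∈ D, HasDerivAt f (-γ * f x) x)
    (hpos : ∀ x ∈ D, 0 < f x) : StrictAntiOn f D := by
  refine strictAntiOn_of_hasDerivWithinAt_neg hD
    (fun x hx => (hf x hx).continuousAt.continuousWithinAt) (f' := fun x => -γ * f x)
    (fun x hx => (hf x (interior_subset hx)).hasDerivWithinAt) fun x hx => ?_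
  rw [hDo.interior_eq] at hx
  nlinarith [hpos x hx]

/-- The logarithmic derivative of `Z₁`, with `r = V'/V` and `c = χ'/χ` evaluated at `σ₁`. -/
theorem hubble_logDeriv_Z₁ (γ s₂ s₃ s₅ r c : ℝ) :
    2 * ((1/6) * (6*s₂^2 + 3*γ*(s₃^2 - 1) + 4*s₅^2) - (4 - 3*γ) * s₂ / (2 * √6) * c
        - ((1/6) * (6*s₂^2 + 3*γ*s₃^2 + 4*s₅^2) + √6 / 6 * s₂ * r))
      + r * (√(2/3) * s₂) + (2 - 3*γ/2) * (c * (√(2/3) * s₂)) = -γ := by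
  have h6 : √6 ^ 2 = 6 := Real.sq_sqrt (by norm_num)
  have h23 : √(2/3) = √6 / 3 := by
    rw [show (2/3 : ℝ) = 6 / 3^2 by norm_num, Real.sqrt_div' _ (by positivity),
      Real.sqrt_sq (by norm_num)]
  rw [h23]
  field_simp
  linear_combination 6 * (4 - 3 * γ) * s₂ * c * h6

theorem stmt_7_general
    (γ : ℝ) (hγ0 : 0 < γ)
    (V V' χ χ' : ℝ → ℝ)
    (hV : ∀ x, HasDerivAt V (V' x) x) (hVpos : ∀ x, 0 < V x)
    (hχ : ∀ x, HasDerivAt χ (χ' x) x) (hχpos : ∀ x, 0 < χ x)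
    (a b : ℝ) (σ1 σ2 σ3 σ4 σ5 : ℝ → ℝ)
    (h1 : ∀ τ ∈ Ioo a b, HasDerivAt σ1 (Real.sqrt (2/3) * σ2 τ) τ)
    (h3 : ∀ τ ∈ Ioo a b, HasDerivAt σ3
      ((1/6) * σ3 τ * (6*(σ2 τ)^2 + 3*γ*((σ3 τ)^2 - 1) + 4*(σ5 τ)^2)
        - ((4 - 3*γ) * σ2 τ * σ3 τ / (2 * Real.sqrt 6)) * (χ' (σ1 τ) / χ (σ1 τ))) τ)
    (h4 : ∀ τ ∈ Ioo a b, HasDerivAt σ4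
      ((1/6) * σ4 τ * (6*(σ2 τ)^2 + 3*γ*(σ3 τ)^2 + 4*(σ5 τ)^2)
        + (Real.sqrt 6 / 6) * σ2 τ * σ4 τ * (V' (σ1 τ) / V (σ1 τ))) τ)
    (h3pos : ∀ τ ∈ Ioo a b, 0 < σ3 τ) (h4pos : ∀ τ ∈ Ioo a b, 0 < σ4 τ) :
    (∀ τ ∈ Ioo a b, HasDerivAt
        (fun s => (σ3 s / σ4 s)^2 * V (σ1 s) * χ (σ1 s) ^ (2 - 3*γ/2))
        (-γ * ((σ3 τ / σ4 τ)^2 * V (σ1 τ) * χ (σ1 τ) ^ (2 - 3*γ/2))) τ)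
    ∧ StrictAntiOn
        (fun s => (σ3 s / σ4 s)^2 * V (σ1 s) * χ (σ1 s) ^ (2 - 3*γ/2))
        (Ioo a b) := by
  have hZ' : ∀ τ ∈ Ioo a b, HasDerivAt
      (fun s => (σ3 s / σ4 s)^2 * V (σ1 s) * χ (σ1 s) ^ (2 - 3*γ/2))
      (-γ * ((σ3 τ / σ4 τ)^2 * V (σ1 τ) * χ (σ1 τ) ^ (2 - 3*γ/2))) τ := by
    intro τ hτ
    have hσ3 := (h3 τ hτ).congr_deriv (by ring :
      _ = σ3 τ * ((1/6) * (6*(σ2 τ)^2 + 3*γ*((σ3 τ)^2 - 1) + 4*(σ5 τ)^2)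
        - (4 - 3*γ) * σ2 τ / (2 * √6) * (χ' (σ1 τ) / χ (σ1 τ))))
    have hσ4 := (h4 τ hτ).congr_deriv (by ring :
      _ = σ4 τ * ((1/6) * (6*(σ2 τ)^2 + 3*γ*(σ3 τ)^2 + 4*(σ5 τ)^2)
        + √6 / 6 * σ2 τ * (V' (σ1 τ) / V (σ1 τ))))
    have hVσ1 := (hV (σ1 τ)).comp_logDeriv (hVpos _).ne' (h1 τ hτ)
    have hχσ1 := ((hχ (σ1 τ)).comp_logDeriv (hχpos _).ne' (h1 τ hτ)).rpow_const_logDeriv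
      (hχpos _) (2 - 3*γ/2)
    convert ((hσ3.div_sq_logDeriv hσ4 (h4pos τ hτ).ne').mul_logDeriv hVσ1).mul_logDeriv hχσ1
      using 1
    rw [← hubble_logDeriv_Z₁ γ (σ2 τ) (σ3 τ) (σ5 τ) (V' (σ1 τ) / V (σ1 τ)) (χ' (σ1 τ) / χ (σ1 τ))]
    ring
  refine ⟨hZ', strictAntiOn_of_hasDerivAt_neg_mul_self (convex_Ioo a b) isOpen_Ioo hγ0 hZ' ?_⟩
  intro τ hτ
  have hq : 0 < σ3 τ / σ4 τ := div_pos (h3pos τ hτ) (h4pos τ hτ)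
  exact mul_pos (mul_pos (pow_pos hq 2) (hVpos _)) (Real.rpow_pos_of_pos (hχpos _) _)

/-- Along any solution of the Hubble-normalized system with `σ₃ > 0` and `σ₄ > 0`, the
function `Z₁ = (σ₃/σ₄)² V(σ₁) χ(σ₁)^{2−3γ/2}` satisfies `Z₁' = −γ Z₁`; in particular
`Z₁` is strictly monotonically decreasing. -/
theorem stmt_7
    (γ : ℝ) (hγ0 : 0 < γ) (hγ2 : γ < 2)
    (V V' χ χ' : ℝ → ℝ)
    (hV : ∀ x, HasDerivAt V (V' x) x) (hVpos : ∀ x, 0 < V x)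
    (hχ : ∀ x, HasDerivAt χ (χ' x) x) (hχpos : ∀ x, 0 < χ x)
    (a b : ℝ) (σ1 σ2 σ3 σ4 σ5 : ℝ → ℝ)
    (h1 : ∀ τ ∈ Ioo a b, HasDerivAt σ1 (Real.sqrt (2/3) * σ2 τ) τ)
    (h2 : ∀ τ ∈ Ioo a b, HasDerivAt σ2
      ((σ2 τ)^3 + (1/6) * (3*γ*(σ3 τ)^2 + 4*(σ5 τ)^2 - 6) * σ2 τ
        - ((σ4 τ)^2 / Real.sqrt 6) * (V' (σ1 τ) / V (σ1 τ))
        + ((4 - 3*γ) * (σ3 τ)^2 / (2 * Real.sqrt 6)) * (χ' (σ1 τ) / χ (σ1 τ))) τ)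
    (h3 : ∀ τ ∈ Ioo a b, HasDerivAt σ3
      ((1/6) * σ3 τ * (6*(σ2 τ)^2 + 3*γ*((σ3 τ)^2 - 1) + 4*(σ5 τ)^2)
        - ((4 - 3*γ) * σ2 τ * σ3 τ / (2 * Real.sqrt 6)) * (χ' (σ1 τ) / χ (σ1 τ))) τ)
    (h4 : ∀ τ ∈ Ioo a b, HasDerivAt σ4
      ((1/6) * σ4 τ * (6*(σ2 τ)^2 + 3*γ*(σ3 τ)^2 + 4*(σ5 τ)^2)
        + (Real.sqrt 6 / 6) * σ2 τ * σ4 τ * (V' (σ1 τ) / V (σ1 τ))) τ)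
    (h5 : ∀ τ ∈ Ioo a b, HasDerivAt σ5
      ((1/6) * σ5 τ * (6*(σ2 τ)^2 + 3*γ*(σ3 τ)^2 + 4*(σ5 τ)^2 - 4)) τ)
    (h3pos : ∀ τ ∈ Ioo a b, 0 < σ3 τ) (h4pos : ∀ τ ∈ Ioo a b, 0 < σ4 τ) :
    (∀ τ ∈ Ioo a b, HasDerivAt
        (fun s => (σ3 s / σ4 s)^2 * V (σ1 s) * χ (σ1 s) ^ (2 - 3*γ/2))
        (-γ * ((σ3 τ / σ4 τ)^2 * V (σ1 τ) * χ (σ1 τ) ^ (2 - 3*γ/2))) τ)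
    ∧ StrictAntiOn
        (fun s => (σ3 s / σ4 s)^2 * V (σ1 s) * χ (σ1 s) ^ (2 - 3*γ/2))
        (Ioo a b) :=
  stmt_7_general γ hγ0 V V' χ χ' hV hVpos hχ hχpos a b σ1 σ2 σ3 σ4 σ5 h1 h3 h4 h3pos h4pos
end

section
/- Let γ ∈ (0, 2) and let χ : ℝ → ℝ be a positive C^1 function. Let (σ_1, σ_2, σ_5) : I → ℝ^3 be a C^1 solution of the reduced system σ_1' = −√(2/3)σ_2; σ_2' = (1/2)(1 − σ_2^2)((2−γ)σ_2 − ((4−3γ)/√6)·χ'(σ_1)/χ(σ_1)) − ((4−3γ)σ_5^2/6)(σ_2 − (√6/2)·χ'(σ_1)/χ(σ_1)); σ_5' = −(1/6)σ_5(3(2−γ)σ_2^2 − (4−3γ)(1−σ_5^2)), with σ_2(τ)^2 + σ_5(τ)^2 < 1 and σ_5(τ) > 0 for all τ ∈ I. Then the function M_3(τ) := (1 − σ_2(τ)^2 − σ_5(τ)^2)^2 · χ(σ_1(τ))^{4−3γ} / σ_5(τ)^4 satisfies M_3'(τ) = −2(4/3 − γ)·M_3(τ) for all τ ∈ I. -/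
open Set

/-!
Every factor of `M₃` has a logarithmic derivative that is polynomial along the flow. With
`y = χ'(σ₁)/χ(σ₁)`, the factor `u := 1 − σ₂² − σ₅²` satisfies
`u' = u · (−(2−γ)σ₂² + (4−3γ)σ₂ y/√6 − (4−3γ)σ₅²/3)`, while `(χ ∘ σ₁)' = −√(2/3) σ₂ y · χ(σ₁)`
and `σ₅'/σ₅` is read off the system. In
`M₃'/M₃ = 2u'/u + (4−3γ)(χ∘σ₁)'/(χ∘σ₁) − 4σ₅'/σ₅` the `σ₂²`, `σ₅²` and `σ₂ y` terms cancel
(as `√(2/3) = 2/√6`), leaving the constant `−2(4−3γ)/3`.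
-/

section LogDeriv

variable {f g : ℝ → ℝ} {a b x : ℝ}

theorem HasDerivAt.pow_of_logDeriv (hf : HasDerivAt f (a * f x) x) (n : ℕ) :
    HasDerivAt (fun s => f s ^ n) (n * a * f x ^ n) x := by
  refine (hf.pow n).congr_deriv ?_
  cases n with
  | zero => simp
  | succ n => push_cast; ring

theorem HasDerivAt.rpow_const_of_logDeriv (hf : HasDerivAt f (a * f x) x) (hx : f x ≠ 0)
    (p : ℝ) : HasDerivAt (fun s => f s ^ p) (p * a * f x ^ p) x := by
  refine (hf.rpow_const (p := p) (Or.inl hx)).congr_deriv ?_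
  rw [Real.rpow_sub_one hx]
  field_simp

theorem HasDerivAt.mul_of_logDeriv (hf : HasDerivAt f (a * f x) x)
    (hg : HasDerivAt g (b * g x) x) :
    HasDerivAt (fun s => f s * g s) ((a + b) * (f x * g x)) x := by
  refine (hf.mul hg).congr_deriv ?_
  ring

theorem HasDerivAt.div_of_logDeriv (hf : HasDerivAt f (a * f x) x)
    (hg : HasDerivAt g (b * g x) x) (hx : g x ≠ 0) :
    HasDerivAt (fun s => f s / g s) ((a - b) * (f x / g x)) x := by
  refine (hf.div hg hx).congr_deriv ?_
  field_simp

end LogDeriv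

theorem sqrt_six_div_two : Real.sqrt 6 / 2 = 3 / Real.sqrt 6 := by
  have h : Real.sqrt 6 ^ 2 = 6 := Real.sq_sqrt (by norm_num)
  field_simp
  linarith

theorem sqrt_two_div_three : Real.sqrt (2 / 3) = 2 / Real.sqrt 6 := by
  rw [eq_div_iff (by positivity), ← Real.sqrt_mul (by norm_num),
    show (2 / 3 * 6 : ℝ) = 2 ^ 2 by norm_num, Real.sqrt_sq (by norm_num)]

theorem stmt_8_general
    (γ : ℝ)
    (χ χ' : ℝ → ℝ)
    (hχ : ∀ x, HasDerivAt χ (χ' x) x) (hχpos : ∀ x, 0 < χ x)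
    (a b : ℝ) (σ1 σ2 σ5 : ℝ → ℝ)
    (h1 : ∀ τ ∈ Ioo a b, HasDerivAt σ1 (-(Real.sqrt (2/3)) * σ2 τ) τ)
    (h2 : ∀ τ ∈ Ioo a b, HasDerivAt σ2
      ((1/2) * (1 - (σ2 τ)^2) *
          ((2 - γ) * σ2 τ - ((4 - 3*γ) / Real.sqrt 6) * (χ' (σ1 τ) / χ (σ1 τ)))
        - ((4 - 3*γ) * (σ5 τ)^2 / 6) *
          (σ2 τ - (Real.sqrt 6 / 2) * (χ' (σ1 τ) / χ (σ1 τ)))) τ)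
    (h5 : ∀ τ ∈ Ioo a b, HasDerivAt σ5
      (-(1/6) * σ5 τ * (3*(2 - γ)*(σ2 τ)^2 - (4 - 3*γ)*(1 - (σ5 τ)^2))) τ)
    (h5pos : ∀ τ ∈ Ioo a b, 0 < σ5 τ) :
    ∀ τ ∈ Ioo a b, HasDerivAt
      (fun s => (1 - (σ2 s)^2 - (σ5 s)^2)^2 * χ (σ1 s) ^ (4 - 3*γ) / (σ5 s)^4)
      (-2 * (4/3 - γ) *
        ((1 - (σ2 τ)^2 - (σ5 τ)^2)^2 * χ (σ1 τ) ^ (4 - 3*γ) / (σ5 τ)^4)) τ := by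
  intro τ hτ
  set y := χ' (σ1 τ) / χ (σ1 τ)
  have hχne : χ (σ1 τ) ≠ 0 := (hχpos _).ne'
  have hu : HasDerivAt (fun s => 1 - σ2 s ^ 2 - σ5 s ^ 2)
      ((-(2 - γ) * σ2 τ ^ 2 + (4 - 3*γ) * σ2 τ * y / Real.sqrt 6 - (4 - 3*γ) * σ5 τ ^ 2 / 3)
        * (1 - σ2 τ ^ 2 - σ5 τ ^ 2)) τ := by
    refine (((hasDerivAt_const τ (1 : ℝ)).sub ((h2 τ hτ).pow 2)).sub
      ((h5 τ hτ).pow 2)).congr_deriv ?_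
    rw [sqrt_six_div_two]
    ring
  have hχσ1 :
      HasDerivAt (fun s => χ (σ1 s)) ((-(2 / Real.sqrt 6) * σ2 τ * y) * χ (σ1 τ)) τ := by
    refine ((hχ (σ1 τ)).comp τ (h1 τ hτ)).congr_deriv ?_
    rw [sqrt_two_div_three, ← div_mul_cancel₀ (χ' (σ1 τ)) hχne]
    ring
  have hσ5 : HasDerivAt σ5
      ((-(1/6) * (3*(2 - γ)*(σ2 τ)^2 - (4 - 3*γ)*(1 - (σ5 τ)^2))) * σ5 τ) τ := by
    refine (h5 τ hτ).congr_deriv ?_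
    ring
  refine (((hu.pow_of_logDeriv 2).mul_of_logDeriv
    (hχσ1.rpow_const_of_logDeriv hχne (4 - 3*γ))).div_of_logDeriv
    (hσ5.pow_of_logDeriv 4) (pow_ne_zero 4 (h5pos τ hτ).ne')).congr_deriv ?_
  congr 1
  field_simp
  ring

/-- Along any solution of the reduced system (on the invariant set `σ₄ = 0` of the
time-reversed Hubble-normalized flat FRW system) with `σ₂² + σ₅² < 1` and `σ₅ > 0`, the
function `M₃ = (1 − σ₂² − σ₅²)² χ(σ₁)^{4−3γ} / σ₅⁴` satisfies `M₃' = −2(4/3 − γ) M₃`. -/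
theorem stmt_8
    (γ : ℝ) (hγ0 : 0 < γ) (hγ2 : γ < 2)
    (χ χ' : ℝ → ℝ)
    (hχ : ∀ x, HasDerivAt χ (χ' x) x) (hχpos : ∀ x, 0 < χ x)
    (a b : ℝ) (σ1 σ2 σ5 : ℝ → ℝ)
    (h1 : ∀ τ ∈ Ioo a b, HasDerivAt σ1 (-(Real.sqrt (2/3)) * σ2 τ) τ)
    (h2 : ∀ τ ∈ Ioo a b, HasDerivAt σ2
      ((1/2) * (1 - (σ2 τ)^2) *
          ((2 - γ) * σ2 τ - ((4 - 3*γ) / Real.sqrt 6) * (χ' (σ1 τ) / χ (σ1 τ)))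
        - ((4 - 3*γ) * (σ5 τ)^2 / 6) *
          (σ2 τ - (Real.sqrt 6 / 2) * (χ' (σ1 τ) / χ (σ1 τ)))) τ)
    (h5 : ∀ τ ∈ Ioo a b, HasDerivAt σ5
      (-(1/6) * σ5 τ * (3*(2 - γ)*(σ2 τ)^2 - (4 - 3*γ)*(1 - (σ5 τ)^2))) τ)
    (hin : ∀ τ ∈ Ioo a b, (σ2 τ)^2 + (σ5 τ)^2 < 1)
    (h5pos : ∀ τ ∈ Ioo a b, 0 < σ5 τ) :
    ∀ τ ∈ Ioo a b, HasDerivAt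
      (fun s => (1 - (σ2 s)^2 - (σ5 s)^2)^2 * χ (σ1 s) ^ (4 - 3*γ) / (σ5 s)^4)
      (-2 * (4/3 - γ) *
        ((1 - (σ2 τ)^2 - (σ5 τ)^2)^2 * χ (σ1 τ) ^ (4 - 3*γ) / (σ5 τ)^4)) τ :=
  stmt_8_general γ χ χ' hχ hχpos a b σ1 σ2 σ5 h1 h2 h5 h5pos
end

section
/- Let γ ∈ (0, 2) and let χ : ℝ → ℝ be a positive C^2 function. Consider the planar vector field f(σ_1, σ_2) = (−√(2/3)σ_2, (1/2)(1 − σ_2^2)((2−γ)σ_2 − ((4−3γ)/√6)·χ'(σ_1)/χ(σ_1))) on the open set S' = (−K, K) × (−1, 1) for K > 0, and the Dulac function B(σ_1, σ_2) = (1 − σ_2^2)^{−1}. Then the divergence ∂/∂σ_1 (B f_1) + ∂/∂σ_2 (B f_2) is identically equal to (2 − γ)/2 > 0 on S'; consequently f has no periodic orbit contained in S'. -/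
open Set

/-!
Dulac's argument, run along trajectories instead of through Green's theorem.
Write `f = (-c σ₂, ½ (1 - σ₂²)(b σ₂ - a χ'(σ₁)/χ(σ₁)))` with `b = 2 - γ > 0`.
On the strip `|σ₂| < 1` the function `V = log (1 - σ₂²) + (a / c) log χ(σ₁)`
satisfies `V' = -b σ₂² ≤ 0` along every trajectory. On a periodic orbit `V` is
periodic and antitone, hence constant, so `σ₂ ≡ 0`; then `σ₁' = -c σ₂ = 0` and the
orbit is a single point.
-/

noncomputable def frwField (a b c : ℝ) (χ χ' : ℝ → ℝ) (p : ℝ × ℝ) : ℝ × ℝ :=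
  (-c * p.2, (1/2) * (1 - p.2^2) * (b * p.2 - a * (χ' p.1 / χ p.1)))

/-- The factor `a / c` makes the `χ'/χ` term of `(log (1 - σ₂²))'` cancel. -/
noncomputable def frwLyapunov (a c : ℝ) (χ : ℝ → ℝ) (p : ℝ × ℝ) : ℝ :=
  Real.log (1 - p.2^2) + a / c * Real.log (χ p.1)

theorem Function.Periodic.eq_of_antitone {V : ℝ → ℝ} {T : ℝ} (hper : Function.Periodic V T)
    (hT : 0 < T) (hV : Antitone V) (s t : ℝ) : V s = V t := by
  suffices key : ∀ s t, s ≤ t → V s = V t by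
    rcases le_total s t with h | h
    · exact key s t h
    · exact (key t s h).symm
  intro s t hst
  obtain ⟨n, hn⟩ := exists_nat_ge ((t - s) / T)
  have hle : t ≤ s + n * T := by rw [div_le_iff₀ hT] at hn; linarith
  refine le_antisymm ?_ (hV hst)
  calc V s = V (s + n * T) := ((hper.nat_mul n) s).symm
    _ ≤ V t := hV hle

theorem Function.Periodic.eq_zero_of_hasDerivAt_of_nonpos {V V' : ℝ → ℝ} {T : ℝ}
    (hper : Function.Periodic V T) (hT : 0 < T) (hV : ∀ t, HasDerivAt V (V' t) t)
    (hV' : V' ≤ 0) (t : ℝ) : V' t = 0 := by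
  have hconst : V = fun _ => V t :=
    funext fun s => hper.eq_of_antitone hT (antitone_of_hasDerivAt_nonpos hV hV') s t
  have hVt := hV t
  rw [hconst] at hVt
  exact hVt.unique (hasDerivAt_const t _)

section frwField

variable {a b c : ℝ} {χ χ' : ℝ → ℝ}

theorem frwField_dulac_divergence_eq {p : ℝ × ℝ} (hp : p.2 ∈ Ioo (-1 : ℝ) 1) :
    deriv (fun s : ℝ => (1 - p.2^2)⁻¹ * (frwField a b c χ χ' (s, p.2)).1) p.1
      + deriv (fun s : ℝ => (1 - s^2)⁻¹ * (frwField a b c χ χ' (p.1, s)).2) p.2 = b / 2 := by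
  have hlinear : (fun s : ℝ => (1 - s^2)⁻¹ * (frwField a b c χ χ' (p.1, s)).2)
      =ᶠ[nhds p.2] fun s => (1/2) * (b * s - a * (χ' p.1 / χ p.1)) := by
    filter_upwards [Ioo_mem_nhds hp.1 hp.2] with s hs
    have hs2 : 1 - s^2 ≠ 0 := by nlinarith [hs.1, hs.2]
    simp only [frwField]
    field_simp
  have hderiv :
      HasDerivAt (fun s : ℝ => (1/2) * (b * s - a * (χ' p.1 / χ p.1))) (1/2 * b) p.2 := by
    simpa using (((hasDerivAt_id p.2).const_mul b).sub_const _).const_mul (1/2 : ℝ)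
  rw [hlinear.deriv_eq, hderiv.deriv]
  simp only [frwField, deriv_const]
  ring

variable {x : ℝ → ℝ × ℝ} (hx : ∀ t, HasDerivAt x (frwField a b c χ χ' (x t)) t)
include hx

theorem frwField_hasDerivAt_fst (t : ℝ) : HasDerivAt (fun t => (x t).1) (-c * (x t).2) t :=
  (ContinuousLinearMap.fst ℝ ℝ ℝ).hasFDerivAt.comp_hasDerivAt t (hx t)

theorem frwField_hasDerivAt_snd (t : ℝ) :
    HasDerivAt (fun t => (x t).2)
      ((1/2) * (1 - (x t).2^2) * (b * (x t).2 - a * (χ' (x t).1 / χ (x t).1))) t :=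
  (ContinuousLinearMap.snd ℝ ℝ ℝ).hasFDerivAt.comp_hasDerivAt t (hx t)

theorem frwLyapunov_hasDerivAt (hc : c ≠ 0) (hχ : ∀ y, HasDerivAt χ (χ' y) y)
    (hχ0 : ∀ y, χ y ≠ 0) {t : ℝ} (ht : (x t).2 ∈ Ioo (-1 : ℝ) 1) :
    HasDerivAt (fun t => frwLyapunov a c χ (x t)) (-b * (x t).2^2) t := by
  have hy : 1 - (x t).2^2 ≠ 0 := by nlinarith [ht.1, ht.2]
  have hlog₁ : HasDerivAt (fun t => Real.log (1 - (x t).2^2))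
      (-(2 * (x t).2 * ((1/2) * (1 - (x t).2^2) * (b * (x t).2 - a * (χ' (x t).1 / χ (x t).1))))
        / (1 - (x t).2^2)) t := by
    simpa using (((frwField_hasDerivAt_snd hx t).pow 2).const_sub 1).log hy
  have hlog₂ : HasDerivAt (fun t => Real.log (χ (x t).1))
      (χ' (x t).1 * (-c * (x t).2) / χ (x t).1) t :=
    ((hχ (x t).1).comp t (frwField_hasDerivAt_fst hx t)).log (hχ0 (x t).1)
  refine (hlog₁.add (hlog₂.const_mul (a / c))).congr_deriv ?_
  have hχt := hχ0 (x t).1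
  field_simp
  ring

theorem frwField_periodic_orbit_const (hb : 0 < b) (hc : c ≠ 0)
    (hχ : ∀ y, HasDerivAt χ (χ' y) y) (hχ0 : ∀ y, χ y ≠ 0)
    (hstrip : ∀ t, (x t).2 ∈ Ioo (-1 : ℝ) 1) {T : ℝ} (hT : 0 < T)
    (hper : Function.Periodic x T) (s t : ℝ) : x s = x t := by
  have hsnd : ∀ t, (x t).2 = 0 := fun t => by
    have hdecay := (hper.comp (frwLyapunov a c χ)).eq_zero_of_hasDerivAt_of_nonpos hT
      (fun t => frwLyapunov_hasDerivAt hx hc hχ hχ0 (hstrip t))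
      (fun t => show -b * (x t).2^2 ≤ 0 by nlinarith [sq_nonneg (x t).2]) t
    simpa [hb.ne'] using hdecay
  have hfst : ∀ t, HasDerivAt (fun t => (x t).1) 0 t := fun t => by
    simpa [hsnd t] using frwField_hasDerivAt_fst hx t
  exact Prod.ext
    (is_const_of_deriv_eq_zero (fun t => (hfst t).differentiableAt) (fun t => (hfst t).deriv) s t)
    (by rw [hsnd, hsnd])

end frwField

theorem stmt_9_general
    (γ : ℝ) (hγ2 : γ < 2)
    (χ χ' : ℝ → ℝ)
    (hχd : ∀ x, HasDerivAt χ (χ' x) x)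
    (hχpos : ∀ x, 0 < χ x)
    (K : ℝ)
    (f : ℝ × ℝ → ℝ × ℝ)
    (hf : ∀ p : ℝ × ℝ, f p =
      (-(Real.sqrt (2/3)) * p.2,
        (1/2) * (1 - p.2^2) *
          ((2 - γ) * p.2 - ((4 - 3*γ) / Real.sqrt 6) * (χ' p.1 / χ p.1)))) :
    (∀ p ∈ (Ioo (-K) K) ×ˢ (Ioo (-1 : ℝ) 1),
      deriv (fun s : ℝ => (1 - p.2^2)⁻¹ * (f (s, p.2)).1) p.1
        + deriv (fun s : ℝ => (1 - s^2)⁻¹ * (f (p.1, s)).2) p.2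
      = (2 - γ) / 2)
    ∧ 0 < (2 - γ) / 2
    ∧ ¬ ∃ (x : ℝ → ℝ × ℝ) (T : ℝ), 0 < T ∧
        (∀ t : ℝ, HasDerivAt x (f (x t)) t) ∧
        (∀ t : ℝ, x t ∈ (Ioo (-K) K) ×ˢ (Ioo (-1 : ℝ) 1)) ∧
        (∀ t : ℝ, x (t + T) = x t) ∧
        (∃ t s : ℝ, x t ≠ x s) := by
  obtain rfl : f = frwField ((4 - 3*γ) / Real.sqrt 6) (2 - γ) (Real.sqrt (2/3)) χ χ' :=
    funext hf
  have hb : 0 < 2 - γ := by linarith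
  refine ⟨fun p hp => frwField_dulac_divergence_eq hp.2, half_pos hb, ?_⟩
  rintro ⟨x, T, hT, hx, hmem, hper, t, s, hne⟩
  exact hne (frwField_periodic_orbit_const hx hb (by positivity) hχd (fun y => (hχpos y).ne')
    (fun t => (hmem t).2) hT hper t s)

/-- With the Dulac function `B(σ₁,σ₂) = (1 − σ₂²)⁻¹`, the divergence of `B·f` for the
planar vector field `f` on `S' = (−K,K) × (−1,1)` is identically `(2 − γ)/2 > 0`;
consequently `f` has no periodic orbit contained in `S'`. -/
theorem stmt_9
    (γ : ℝ) (hγ0 : 0 < γ) (hγ2 : γ < 2)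
    (χ χ' χ'' : ℝ → ℝ)
    (hχd : ∀ x, HasDerivAt χ (χ' x) x)
    (hχd' : ∀ x, HasDerivAt χ' (χ'' x) x)
    (hχpos : ∀ x, 0 < χ x)
    (K : ℝ) (hK : 0 < K)
    (f : ℝ × ℝ → ℝ × ℝ)
    (hf : ∀ p : ℝ × ℝ, f p =
      (-(Real.sqrt (2/3)) * p.2,
        (1/2) * (1 - p.2^2) *
          ((2 - γ) * p.2 - ((4 - 3*γ) / Real.sqrt 6) * (χ' p.1 / χ p.1)))) :
    (∀ p ∈ (Ioo (-K) K) ×ˢ (Ioo (-1 : ℝ) 1),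
      deriv (fun s : ℝ => (1 - p.2^2)⁻¹ * (f (s, p.2)).1) p.1
        + deriv (fun s : ℝ => (1 - s^2)⁻¹ * (f (p.1, s)).2) p.2
      = (2 - γ) / 2)
    ∧ 0 < (2 - γ) / 2
    ∧ ¬ ∃ (x : ℝ → ℝ × ℝ) (T : ℝ), 0 < T ∧
        (∀ t : ℝ, HasDerivAt x (f (x t)) t) ∧
        (∀ t : ℝ, x t ∈ (Ioo (-K) K) ×ˢ (Ioo (-1 : ℝ) 1)) ∧
        (∀ t : ℝ, x (t + T) = x t) ∧
        (∃ t s : ℝ, x t ≠ x s) :=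
  stmt_9_general γ hγ2 χ χ' hχd hχpos K f hf
end

section
/- Let γ ∈ (0, 2), let V ∈ C^2 and χ ∈ C^1 be positive functions, and let σ_{1c} ∈ ℝ satisfy V'(σ_{1c}) = 0. Then Q_2 := (σ_{1c}, 0, 0, 0) is an equilibrium point of the four-dimensional projected system, and the characteristic polynomial of the Jacobian matrix of the system at Q_2 equals (λ + 2/3)(λ + γ/2)(λ^2 + λ + V''(σ_{1c})/(3V(σ_{1c}))); equivalently, the eigenvalues of the linearization are −2/3, −γ/2, and −1/2 ± (1/2)√(1 − (4/3)·V''(σ_{1c})/V(σ_{1c})). -/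
/-!
At `Q₂` every term of the field carries a factor `σ₂`, `σ₃` or `σ₅`, except `−V'/(√6 V)`,
which vanishes at a critical point. Along the `σ₂`, `σ₃`, `σ₅` axes the field restricts to
polynomial curves (the `χ`-terms are quadratic in `σ₃` there) whose derivatives at `0` are read
off their linear terms; along the `σ₁` axis only `−V'/(√6 V)` survives, and its derivative at a
critical point is `−V''/(√6 V)`. The Jacobian is thus block diagonal with blocks
`[[0, √(2/3)], [−V''/(√6 V), −1]]`, `−γ/2`, `−2/3`, and `√(2/3) / √6 = 1/3` turns the first
block into the factor `λ² + λ + V''/(3V)`.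
-/

open Function Matrix

theorem HasDerivAt.vecCons {𝕜 : Type*} [NontriviallyNormedField 𝕜] {n : ℕ} {f : 𝕜 → 𝕜}
    {fs : 𝕜 → Fin n → 𝕜} {a : 𝕜} {as : Fin n → 𝕜} {x : 𝕜}
    (hf : HasDerivAt f a x) (hfs : HasDerivAt fs as x) :
    HasDerivAt (fun s => vecCons (f s) (fs s)) (vecCons a as) x :=
  hasDerivAt_pi.mpr (Fin.cases (by simpa using hf) fun i => by simpa using hasDerivAt_pi.mp hfs i)

theorem jacobian_eq_of_hasDerivAt {𝕜 : Type*} [NontriviallyNormedField 𝕜] {n : ℕ}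
    {g : (Fin n → 𝕜) → Fin n → 𝕜} {x : Fin n → 𝕜} {J : Matrix (Fin n) (Fin n) 𝕜}
    (h : ∀ j, HasDerivAt (fun s => g (update x j s)) (fun i => J i j) (x j)) :
    Matrix.of (fun i j => deriv (fun s => g (update x j s) i) (x j)) = J := by
  ext i j
  exact (hasDerivAt_pi.mp (h j) i).deriv

theorem hasDerivAt_cube_sub_self_zero {𝕜 : Type*} [NontriviallyNormedField 𝕜] :
    HasDerivAt (fun s : 𝕜 => s ^ 3 - s) (-1) 0 := by
  simpa using (hasDerivAt_pow 3 (0 : 𝕜)).fun_sub (hasDerivAt_id' 0)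

theorem det_smul_one_sub_fin_four_block {R : Type*} [CommRing R] (lam a b c d p q : R) :
    (lam • (1 : Matrix (Fin 4) (Fin 4) R) - !![a, b, 0, 0; c, d, 0, 0; 0, 0, p, 0; 0, 0, 0, q]).det
      = ((lam - a) * (lam - d) - b * c) * (lam - p) * (lam - q) := by
  simp [det_succ_row_zero, Fin.sum_univ_succ, Fin.succAbove, Matrix.one_apply]
  ring

theorem hasDerivAt_deriv_div_self_of_deriv_eq_zero {𝕜 : Type*} [NontriviallyNormedField 𝕜]
    {V : 𝕜 → 𝕜} {x : 𝕜} (hV : DifferentiableAt 𝕜 V x) (hV' : DifferentiableAt 𝕜 (deriv V) x)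
    (hx : V x ≠ 0) (hcrit : deriv V x = 0) :
    HasDerivAt (fun s => deriv V s / V s) (deriv (deriv V) x / V x) x := by
  have h := hV'.hasDerivAt.div hV.hasDerivAt hx
  rwa [hcrit, zero_mul, sub_zero, sq, mul_div_mul_right _ _ hx] at h

noncomputable def projectedField (γ : ℝ) (V χ : ℝ → ℝ) (x : Fin 4 → ℝ) : Fin 4 → ℝ :=
  ![√(2/3) * x 1,
    (x 1)^3 + (1/6) * (3*γ*(x 2)^2 + 4*(x 3)^2 - 6) * x 1
      - ((1 - (x 1)^2 - (x 2)^2 - (x 3)^2) / √6) * (deriv V (x 0) / V (x 0))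
      + ((4 - 3*γ) * (x 2)^2 / (2 * √6)) * (deriv χ (x 0) / χ (x 0)),
    (1/6) * x 2 * (6*(x 1)^2 + 3*γ*((x 2)^2 - 1) + 4*(x 3)^2)
      - ((4 - 3*γ) * x 1 * x 2 / (2 * √6)) * (deriv χ (x 0) / χ (x 0)),
    (1/6) * x 3 * (6*(x 1)^2 + 3*γ*(x 2)^2 + 4*(x 3)^2 - 4)]

noncomputable def projectedLinearization (γ : ℝ) (V : ℝ → ℝ) (σ : ℝ) : Matrix (Fin 4) (Fin 4) ℝ :=
  !![0, √(2/3), 0, 0;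
    -(1 / √6) * (deriv (deriv V) σ / V σ), -1, 0, 0;
    0, 0, -(γ/2), 0;
    0, 0, 0, -(2/3)]

section

variable (γ : ℝ) {V : ℝ → ℝ} (χ : ℝ → ℝ) {σ : ℝ}

theorem projectedField_eq_zero_of_deriv_eq_zero (hcrit : deriv V σ = 0) :
    projectedField γ V χ ![σ, 0, 0, 0] = 0 := by
  ext i
  fin_cases i <;>
    simp only [projectedField, hcrit, Fin.isValue, Fin.zero_eta, Fin.mk_one, Fin.reduceFinMk,
      cons_val, Pi.zero_apply] <;>
    ring

theorem projectedField_update_zero (s : ℝ) :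
    projectedField γ V χ (update ![σ, 0, 0, 0] 0 s)
      = ![0, -(1 / √6) * (deriv V s / V s), 0, 0] := by
  ext i
  fin_cases i <;>
    simp only [projectedField, update, Fin.isValue, Fin.zero_eta, Fin.mk_one, Fin.reduceFinMk,
      Fin.reduceEq, ↓reduceDIte, cons_val] <;>
    ring

theorem projectedField_update_one (hcrit : deriv V σ = 0) (s : ℝ) :
    projectedField γ V χ (update ![σ, 0, 0, 0] 1 s) = ![√(2/3) * s, s^3 - s, 0, 0] := by
  ext i
  fin_cases i <;>
    simp only [projectedField, update, hcrit, Fin.isValue, Fin.zero_eta, Fin.mk_one,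
      Fin.reduceFinMk, Fin.reduceEq, ↓reduceDIte, cons_val] <;>
    ring

theorem projectedField_update_two (hcrit : deriv V σ = 0) (s : ℝ) :
    projectedField γ V χ (update ![σ, 0, 0, 0] 2 s)
      = ![0, (4 - 3*γ) / (2 * √6) * (deriv χ σ / χ σ) * s^2, γ/2 * (s^3 - s), 0] := by
  ext i
  fin_cases i <;>
    simp only [projectedField, update, hcrit, Fin.isValue, Fin.zero_eta, Fin.mk_one,
      Fin.reduceFinMk, Fin.reduceEq, ↓reduceDIte, cons_val] <;>
    ring

theorem projectedField_update_three (hcrit : deriv V σ = 0) (s : ℝ) :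
    projectedField γ V χ (update ![σ, 0, 0, 0] 3 s) = ![0, 0, 0, 2/3 * (s^3 - s)] := by
  ext i
  fin_cases i <;>
    simp only [projectedField, update, hcrit, Fin.isValue, Fin.zero_eta, Fin.mk_one,
      Fin.reduceFinMk, Fin.reduceEq, ↓reduceDIte, cons_val] <;>
    ring

theorem hasDerivAt_projectedField_update_zero (hV : DifferentiableAt ℝ V σ)
    (hV' : DifferentiableAt ℝ (deriv V) σ) (hVσ : V σ ≠ 0) (hcrit : deriv V σ = 0) :
    HasDerivAt (fun s => projectedField γ V χ (update ![σ, 0, 0, 0] 0 s))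
      (fun i => projectedLinearization γ V σ i 0) σ := by
  simp only [projectedField_update_zero]
  convert (hasDerivAt_const σ 0).vecCons
    (((hasDerivAt_deriv_div_self_of_deriv_eq_zero hV hV' hVσ hcrit).const_mul (-(1 / √6))).vecCons
    ((hasDerivAt_const σ 0).vecCons
    ((hasDerivAt_const σ 0).vecCons (hasDerivAt_const σ ![])))) using 1
  ext i; fin_cases i <;> simp [projectedLinearization]

theorem hasDerivAt_projectedField_update_one (hcrit : deriv V σ = 0) :
    HasDerivAt (fun s => projectedField γ V χ (update ![σ, 0, 0, 0] 1 s))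
      (fun i => projectedLinearization γ V σ i 1) 0 := by
  simp only [projectedField_update_one γ χ hcrit]
  convert ((hasDerivAt_id' (0 : ℝ)).const_mul √(2/3)).vecCons
    (hasDerivAt_cube_sub_self_zero.vecCons
    ((hasDerivAt_const 0 0).vecCons
    ((hasDerivAt_const 0 0).vecCons (hasDerivAt_const 0 ![])))) using 1
  ext i; fin_cases i <;> simp [projectedLinearization]

theorem hasDerivAt_projectedField_update_two (hcrit : deriv V σ = 0) :
    HasDerivAt (fun s => projectedField γ V χ (update ![σ, 0, 0, 0] 2 s))
      (fun i => projectedLinearization γ V σ i 2) 0 := by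
  simp only [projectedField_update_two γ χ hcrit]
  convert (hasDerivAt_const 0 0).vecCons
    (((hasDerivAt_pow 2 (0 : ℝ)).const_mul ((4 - 3*γ) / (2 * √6) * (deriv χ σ / χ σ))).vecCons
    ((hasDerivAt_cube_sub_self_zero.const_mul (γ/2)).vecCons
    ((hasDerivAt_const 0 0).vecCons (hasDerivAt_const 0 ![])))) using 1
  ext i; fin_cases i <;> simp [projectedLinearization]

theorem hasDerivAt_projectedField_update_three (hcrit : deriv V σ = 0) :
    HasDerivAt (fun s => projectedField γ V χ (update ![σ, 0, 0, 0] 3 s))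
      (fun i => projectedLinearization γ V σ i 3) 0 := by
  simp only [projectedField_update_three γ χ hcrit]
  convert (hasDerivAt_const 0 0).vecCons ((hasDerivAt_const 0 0).vecCons
    ((hasDerivAt_const 0 0).vecCons
    ((hasDerivAt_cube_sub_self_zero.const_mul (2/3 : ℝ)).vecCons (hasDerivAt_const 0 ![])))) using 1
  ext i; fin_cases i <;> simp [projectedLinearization]

theorem jacobian_projectedField (hV : DifferentiableAt ℝ V σ)
    (hV' : DifferentiableAt ℝ (deriv V) σ) (hVσ : V σ ≠ 0) (hcrit : deriv V σ = 0) :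
    Matrix.of (fun i j => deriv (fun s => projectedField γ V χ (update ![σ, 0, 0, 0] j s) i)
      (![σ, 0, 0, 0] j)) = projectedLinearization γ V σ := by
  refine jacobian_eq_of_hasDerivAt fun j => ?_
  fin_cases j
  exacts [hasDerivAt_projectedField_update_zero γ χ hV hV' hVσ hcrit,
    hasDerivAt_projectedField_update_one γ χ hcrit, hasDerivAt_projectedField_update_two γ χ hcrit,
    hasDerivAt_projectedField_update_three γ χ hcrit]

end

theorem stmt_12_general
    (γ : ℝ)
    (V χ : ℝ → ℝ) (hV : ContDiff ℝ 2 V)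
    (hVpos : ∀ x, 0 < V x)
    (σ1c : ℝ) (hcrit : deriv V σ1c = 0)
    -- the four-dimensional projected system, in variables `(σ₁, σ₂, σ₃, σ₅)`
    (g : (Fin 4 → ℝ) → Fin 4 → ℝ)
    (hg : ∀ x : Fin 4 → ℝ, g x =
      ![Real.sqrt (2/3) * x 1,
        (x 1)^3 + (1/6) * (3*γ*(x 2)^2 + 4*(x 3)^2 - 6) * x 1
          - ((1 - (x 1)^2 - (x 2)^2 - (x 3)^2) / Real.sqrt 6) * (deriv V (x 0) / V (x 0))
          + ((4 - 3*γ) * (x 2)^2 / (2 * Real.sqrt 6)) * (deriv χ (x 0) / χ (x 0)),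
        (1/6) * x 2 * (6*(x 1)^2 + 3*γ*((x 2)^2 - 1) + 4*(x 3)^2)
          - ((4 - 3*γ) * x 1 * x 2 / (2 * Real.sqrt 6)) * (deriv χ (x 0) / χ (x 0)),
        (1/6) * x 3 * (6*(x 1)^2 + 3*γ*(x 2)^2 + 4*(x 3)^2 - 4)])
    (Q2 : Fin 4 → ℝ) (hQ2 : Q2 = ![σ1c, 0, 0, 0]) :
    -- `Q₂` is an equilibrium point
    g Q2 = 0
    -- the characteristic polynomial of the Jacobian matrix at `Q₂`
    ∧ ∀ lam : ℝ,
      (lam • (1 : Matrix (Fin 4) (Fin 4) ℝ)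
        - Matrix.of (fun i j =>
            deriv (fun s => g (Function.update Q2 j s) i) (Q2 j))).det
      = (lam + 2/3) * (lam + γ/2)
          * (lam^2 + lam + deriv (deriv V) σ1c / (3 * V σ1c)) := by
  obtain rfl : g = projectedField γ V χ := funext hg
  subst hQ2
  refine ⟨projectedField_eq_zero_of_deriv_eq_zero γ χ hcrit, fun lam => ?_⟩
  have hVσ : V σ1c ≠ 0 := (hVpos σ1c).ne'
  rw [jacobian_projectedField γ χ (hV.differentiable two_ne_zero σ1c)
    (hV.differentiable_deriv_two σ1c) hVσ hcrit, projectedLinearization,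
    det_smul_one_sub_fin_four_block]
  have hsqrt : Real.sqrt (2/3) * (1 / Real.sqrt 6) = 1 / 3 := by
    rw [one_div, ← Real.sqrt_inv, ← Real.sqrt_mul (by norm_num)]
    norm_num
  linear_combination (deriv (deriv V) σ1c / V σ1c * (lam + γ/2) * (lam + 2/3)) * hsqrt

/-- At a critical point `σ_{1c}` of the potential, `Q₂ = (σ_{1c}, 0, 0, 0)` is an
equilibrium of the four-dimensional projected system, and the characteristic polynomial
of the Jacobian matrix there equals
`(λ + 2/3)(λ + γ/2)(λ² + λ + V''(σ_{1c})/(3V(σ_{1c})))`; equivalently, the eigenvalues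
of the linearization are `−2/3`, `−γ/2`, `−1/2 ± (1/2)√(1 − (4/3)V''(σ_{1c})/V(σ_{1c}))`. -/
theorem stmt_12
    (γ : ℝ) (hγ0 : 0 < γ) (hγ2 : γ < 2)
    (V χ : ℝ → ℝ) (hV : ContDiff ℝ 2 V) (hχ : ContDiff ℝ 1 χ)
    (hVpos : ∀ x, 0 < V x) (hχpos : ∀ x, 0 < χ x)
    (σ1c : ℝ) (hcrit : deriv V σ1c = 0)
    -- the four-dimensional projected system, in variables `(σ₁, σ₂, σ₃, σ₅)`
    (g : (Fin 4 → ℝ) → Fin 4 → ℝ)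
    (hg : ∀ x : Fin 4 → ℝ, g x =
      ![Real.sqrt (2/3) * x 1,
        (x 1)^3 + (1/6) * (3*γ*(x 2)^2 + 4*(x 3)^2 - 6) * x 1
          - ((1 - (x 1)^2 - (x 2)^2 - (x 3)^2) / Real.sqrt 6) * (deriv V (x 0) / V (x 0))
          + ((4 - 3*γ) * (x 2)^2 / (2 * Real.sqrt 6)) * (deriv χ (x 0) / χ (x 0)),
        (1/6) * x 2 * (6*(x 1)^2 + 3*γ*((x 2)^2 - 1) + 4*(x 3)^2)
          - ((4 - 3*γ) * x 1 * x 2 / (2 * Real.sqrt 6)) * (deriv χ (x 0) / χ (x 0)),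
        (1/6) * x 3 * (6*(x 1)^2 + 3*γ*(x 2)^2 + 4*(x 3)^2 - 4)])
    (Q2 : Fin 4 → ℝ) (hQ2 : Q2 = ![σ1c, 0, 0, 0]) :
    -- `Q₂` is an equilibrium point
    g Q2 = 0
    -- the characteristic polynomial of the Jacobian matrix at `Q₂`
    ∧ ∀ lam : ℝ,
      (lam • (1 : Matrix (Fin 4) (Fin 4) ℝ)
        - Matrix.of (fun i j =>
            deriv (fun s => g (Function.update Q2 j s) i) (Q2 j))).det
      = (lam + 2/3) * (lam + γ/2)
          * (lam^2 + lam + deriv (deriv V) σ1c / (3 * V σ1c)) :=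
  stmt_12_general γ V χ hV hVpos σ1c hcrit g hg Q2 hQ2
end

section
/- For the scalar one-dimensional ODE x' = −(2/3)x^2 + (5/9)x^3 + (4/9)x^4, the origin x = 0 is an equilibrium which is unstable: there exists ε > 0 such that for every δ > 0 there exist x_0 with 0 < |x_0| < δ, a time T > 0, and a solution x : [0, T] → ℝ of the ODE with x(0) = x_0 and |x(T)| ≥ ε. In fact, any solution with x(0) < 0 is strictly decreasing as long as it stays in a sufficiently small punctured left-neighborhood of 0 and leaves it in finite forward time. -/
/-!
On `[-1, 0]` the field satisfies `f y ≤ -(2/3) y²`. A solution starting at `x₀ ∈ (-1, 0)` is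
therefore decreasing, so `x²` only grows and the speed never drops below `(2/3) x₀²`: the
solution leaves `(-1, 0)` before time `3 / (2 x₀²)`. Instability needs a solution on such a long
time interval. Composing `f` with the projection onto `[-1, 0]` gives a bounded, globally
Lipschitz field, for which Picard–Lindelöf yields solutions on every time interval; such a
solution solves the original equation up to the first time it reaches `-1`.
-/

open Set
open scoped NNReal

theorem exists_forall_mem_Icc_hasDerivAt_of_lipschitzWith
    {E : Type*} [NormedAddCommGroup E] [NormedSpace ℝ E] [CompleteSpace E]
    {v : E → E} {K L : ℝ≥0} (hv : LipschitzWith K v) (hL : ∀ x, ‖v x‖ ≤ L) (x₀ : E) (T : ℝ) :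
    ∃ α : ℝ → E, α 0 = x₀ ∧ ∀ t ∈ Icc 0 T, HasDerivAt α (v (α t)) t := by
  have h0 : (0 : ℝ) ∈ Icc (-1) (|T| + 1) := ⟨by norm_num, by positivity⟩
  -- moving at speed at most `L`, a solution stays in the ball of radius `L * (|T| + 1)`
  have hPL : IsPicardLindelof (fun _ ↦ v) (⟨0, h0⟩ : Icc (-1 : ℝ) (|T| + 1)) x₀
      (L * ⟨|T| + 1, by positivity⟩) 0 L K :=
    .of_time_independent (fun x _ ↦ hL x) hv.lipschitzOnWith (by
      rw [max_eq_left (by norm_num)]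
      simp only [sub_zero, NNReal.coe_zero]
      exact le_rfl)
  obtain ⟨α, hα0, hα⟩ := hPL.exists_eq_forall_mem_Icc_hasDerivWithinAt₀
  refine ⟨α, hα0, fun t ht ↦ (hα t ?_).hasDerivAt (Icc_mem_nhds ?_ ?_)⟩
  · exact ⟨by linarith [ht.1], ht.2.trans (le_abs_self T) |>.trans (by linarith)⟩
  · linarith [ht.1]
  · linarith [ht.2.trans (le_abs_self T)]

theorem ContDiff.exists_lipschitzWith_comp_projIcc {f : ℝ → ℝ} (hf : ContDiff ℝ 1 f) {a b : ℝ}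
    (hab : a ≤ b) : ∃ K, LipschitzWith K (fun y ↦ f (projIcc a b hab y)) := by
  obtain ⟨K, hK⟩ :=
    hf.locallyLipschitz.locallyLipschitzOn.exists_lipschitzOnWith_of_compact isCompact_Icc
  exact ⟨K * 1, (lipschitzOnWith_iff_restrict.mp hK).comp (LipschitzWith.projIcc hab)⟩

theorem ContDiff.exists_bound_comp_projIcc {f : ℝ → ℝ} (hf : ContDiff ℝ 1 f) {a b : ℝ}
    (hab : a ≤ b) : ∃ L : ℝ≥0, ∀ y, ‖f (projIcc a b hab y)‖ ≤ L := by
  obtain ⟨C, hC⟩ := isCompact_Icc.exists_bound_of_continuousOn hf.continuous.continuousOn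
  exact ⟨C.toNNReal, fun y ↦ (hC _ (projIcc a b hab y).2).trans (Real.le_coe_toNNReal C)⟩

theorem ContDiff.exists_forall_mem_Icc_hasDerivAt_comp_projIcc {f : ℝ → ℝ} (hf : ContDiff ℝ 1 f)
    {a b : ℝ} (hab : a ≤ b) (x₀ T : ℝ) :
    ∃ x : ℝ → ℝ, x 0 = x₀ ∧ ∀ t ∈ Icc 0 T, HasDerivAt x (f (projIcc a b hab (x t))) t := by
  obtain ⟨K, hK⟩ := hf.exists_lipschitzWith_comp_projIcc hab
  obtain ⟨L, hL⟩ := hf.exists_bound_comp_projIcc hab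
  exact exists_forall_mem_Icc_hasDerivAt_of_lipschitzWith hK hL x₀ T

theorem antitoneOn_Icc_of_hasDerivAt_nonpos {x x' : ℝ → ℝ} {a b : ℝ}
    (hx : ∀ t ∈ Icc a b, HasDerivAt x (x' t) t) (hx' : ∀ t ∈ Icc a b, x' t ≤ 0) :
    AntitoneOn x (Icc a b) :=
  antitoneOn_of_hasDerivWithinAt_nonpos (convex_Icc a b)
    (fun t ht ↦ (hx t ht).continuousAt.continuousWithinAt)
    (fun t ht ↦ (hx t (interior_subset ht)).hasDerivWithinAt)
    (fun t ht ↦ hx' t (interior_subset ht))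

theorem strictAntiOn_Icc_of_hasDerivAt_neg {x x' : ℝ → ℝ} {a b : ℝ}
    (hx : ∀ t ∈ Icc a b, HasDerivAt x (x' t) t) (hx' : ∀ t ∈ Icc a b, x' t < 0) :
    StrictAntiOn x (Icc a b) :=
  strictAntiOn_of_hasDerivWithinAt_neg (convex_Icc a b)
    (fun t ht ↦ (hx t ht).continuousAt.continuousWithinAt)
    (fun t ht ↦ (hx t (interior_subset ht)).hasDerivWithinAt)
    (fun t ht ↦ hx' t (interior_subset ht))

theorem le_sub_mul_of_hasDerivAt_le_neg_mul_sq {x x' : ℝ → ℝ} {c T : ℝ} (hc : 0 ≤ c)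
    (hT : 0 ≤ T) (hx : ∀ t ∈ Icc 0 T, HasDerivAt x (x' t) t)
    (hx' : ∀ t ∈ Icc 0 T, x' t ≤ -c * x t ^ 2) (h0 : x 0 ≤ 0) :
    x T ≤ x 0 - c * x 0 ^ 2 * T := by
  have h0mem : (0 : ℝ) ∈ Icc 0 T := ⟨le_rfl, hT⟩
  have hanti : AntitoneOn x (Icc 0 T) :=
    antitoneOn_Icc_of_hasDerivAt_nonpos hx fun t ht ↦
      (hx' t ht).trans (by nlinarith [sq_nonneg (x t)])
  have hspeed : ∀ t ∈ Icc 0 T, x' t + c * x 0 ^ 2 ≤ 0 := fun t ht ↦ by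
    have hxt : x t ≤ x 0 := hanti h0mem ht ht.1
    nlinarith [hx' t ht, mul_le_mul_of_nonneg_left (by nlinarith : x 0 ^ 2 ≤ x t ^ 2) hc]
  have := antitoneOn_Icc_of_hasDerivAt_nonpos
    (fun t ht ↦ (hx t ht).add ((hasDerivAt_id t).const_mul (c * x 0 ^ 2))) (by simpa using hspeed)
    h0mem ⟨hT, le_rfl⟩ hT
  simp only [Pi.add_apply, id_eq, mul_zero, add_zero] at this
  linarith

theorem exists_hasDerivAt_eq_neg_of_le_neg_mul_sq {g : ℝ → ℝ} (hg : ContDiff ℝ 1 g) {c r : ℝ}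
    (hc : 0 < c) (hgc : ∀ y ∈ Icc (-r) 0, g y ≤ -c * y ^ 2) {x₀ : ℝ} (hx₀ : x₀ ∈ Ioo (-r) 0) :
    ∃ T > 0, ∃ x : ℝ → ℝ, x 0 = x₀ ∧ (∀ t ∈ Icc 0 T, HasDerivAt x (g (x t)) t) ∧ x T = -r := by
  have hr : -r ≤ 0 := hx₀.1.le.trans hx₀.2.le
  set T₀ := r / (c * x₀ ^ 2)
  have hT₀ : 0 < T₀ := div_pos (by linarith [hx₀.1, hx₀.2]) (by have := hx₀.2.ne; positivity)
  obtain ⟨x, hx0, hx⟩ := hg.exists_forall_mem_Icc_hasDerivAt_comp_projIcc hr x₀ T₀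
  have hanti : AntitoneOn x (Icc 0 T₀) := antitoneOn_Icc_of_hasDerivAt_nonpos hx fun t _ ↦
    (hgc _ (projIcc (-r) 0 hr (x t)).2).trans
      (by nlinarith [sq_nonneg (projIcc (-r) 0 hr (x t) : ℝ)])
  have hle : ∀ t ∈ Icc 0 T₀, x t ≤ x₀ := fun t ht ↦ hx0 ▸ hanti ⟨le_rfl, hT₀.le⟩ ht ht.1
  have hsol : ∀ t ∈ Icc 0 T₀, -r ≤ x t → HasDerivAt x (g (x t)) t := fun t ht hrt ↦ by
    simpa [projIcc_of_mem hr ⟨hrt, (hle t ht).trans hx₀.2.le⟩] using hx t ht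
  have hend : x T₀ ≤ -r := by
    by_contra! h
    have hrt : ∀ t ∈ Icc 0 T₀, -r ≤ x t := fun t ht ↦ h.le.trans (hanti ht ⟨hT₀.le, le_rfl⟩ ht.2)
    have := le_sub_mul_of_hasDerivAt_le_neg_mul_sq hc.le hT₀.le (fun t ht ↦ hsol t ht (hrt t ht))
      (fun t ht ↦ hgc _ ⟨hrt t ht, (hle t ht).trans hx₀.2.le⟩) (hx0 ▸ hx₀.2.le)
    have hspeed : c * x₀ ^ 2 * T₀ = r := mul_div_cancel₀ r (by have := hx₀.2.ne; positivity)
    rw [hx0, hspeed] at this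
    linarith [hx₀.2]
  obtain ⟨T, hT, hxT⟩ := intermediate_value_Icc' hT₀.le
    (fun t ht ↦ (hx t ht).continuousAt.continuousWithinAt) ⟨hend, hx0 ▸ hx₀.1.le⟩
  have hT0 : T ≠ 0 := by rintro rfl; linarith [hx₀.1, hx0]
  exact ⟨T, lt_of_le_of_ne hT.1 hT0.symm, x, hx0,
    fun t ht ↦ hsol t ⟨ht.1, ht.2.trans hT.2⟩ (hxT ▸ hanti ⟨ht.1, ht.2.trans hT.2⟩ hT ht.2), hxT⟩

theorem exists_notMem_Ioo_of_le_neg_mul_sq {g : ℝ → ℝ} {c r : ℝ} (hc : 0 < c)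
    (hgc : ∀ y ∈ Icc (-r) 0, g y ≤ -c * y ^ 2) {x : ℝ → ℝ}
    (hx : ∀ t, 0 ≤ t → HasDerivAt x (g (x t)) t) (h0 : x 0 ∈ Ioo (-r) 0) :
    ∃ T, 0 < T ∧ x T ∉ Ioo (-r) 0 := by
  by_contra! hstay
  set T₀ := r / (c * x 0 ^ 2)
  have hx0 : x 0 ≠ 0 := h0.2.ne
  have hT₀ : 0 < T₀ := div_pos (by linarith [h0.1, h0.2]) (by positivity)
  have hmem : ∀ t ∈ Icc 0 T₀, x t ∈ Icc (-r) 0 := fun t ht ↦ by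
    rcases ht.1.eq_or_lt with rfl | ht0
    exacts [Ioo_subset_Icc_self h0, Ioo_subset_Icc_self (hstay t ht0)]
  have := le_sub_mul_of_hasDerivAt_le_neg_mul_sq hc.le hT₀.le (fun t ht ↦ hx t ht.1)
    (fun t ht ↦ hgc _ (hmem t ht)) h0.2.le
  have hspeed : c * x 0 ^ 2 * T₀ = r := mul_div_cancel₀ r (by positivity)
  rw [hspeed] at this
  linarith [(hstay T₀ hT₀).1, h0.2]

/-- For the scalar ODE `x' = −(2/3)x² + (5/9)x³ + (4/9)x⁴` (the dynamics on the center
manifold of the de Sitter equilibrium of quadratic gravity), the origin is an unstable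
equilibrium; in fact, any solution starting in a sufficiently small punctured
left-neighborhood of `0` is strictly decreasing while it stays there and leaves it in
finite forward time. -/
theorem stmt_16
    (f : ℝ → ℝ)
    (hf : ∀ x : ℝ, f x = -(2/3) * x^2 + (5/9) * x^3 + (4/9) * x^4) :
    -- the origin is an equilibrium
    f 0 = 0
    -- the origin is unstable
    ∧ (∃ ε > 0, ∀ δ > 0,
        ∃ (x0 : ℝ) (T : ℝ) (x : ℝ → ℝ),
          0 < |x0| ∧ |x0| < δ ∧ 0 < T ∧ x 0 = x0 ∧
          (∀ t ∈ Icc (0:ℝ) T, HasDerivAt x (f (x t)) t) ∧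
          ε ≤ |x T|)
    -- solutions with `x(0) < 0` decrease in a small punctured left-neighborhood of `0`
    -- and leave it in finite forward time
    ∧ (∃ r > 0, ∀ x : ℝ → ℝ,
        (∀ t : ℝ, 0 ≤ t → HasDerivAt x (f (x t)) t) →
        -r < x 0 → x 0 < 0 →
        (∀ s t : ℝ, 0 ≤ s → s < t →
          (∀ u, s ≤ u → u ≤ t → x u ∈ Ioo (-r) 0) → x t < x s) ∧
        (∃ T : ℝ, 0 < T ∧ x T ∉ Ioo (-r) 0)) := by
  have hcd : ContDiff ℝ 1 f := by rw [funext hf]; fun_prop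
  have hquad : ∀ y ∈ Icc (-1 : ℝ) 0, f y ≤ -(2/3) * y ^ 2 := fun y ⟨h1, h2⟩ ↦ by
    rw [hf]
    nlinarith [mul_nonneg (pow_nonneg (neg_nonneg.2 h2) 3) (by linarith : (0:ℝ) ≤ 5 + 4 * y)]
  have hc : (0 : ℝ) < 2 / 3 := by norm_num
  refine ⟨by simp [hf], ⟨1, one_pos, fun δ hδ ↦ ?_⟩, ⟨1, one_pos, fun x hx h0l h0r ↦ ⟨?_, ?_⟩⟩⟩
  · have hm : 0 < min δ 1 := lt_min hδ one_pos
    have hx₀ : -(min δ 1 / 2) ∈ Ioo (-1) 0 := ⟨by linarith [min_le_right δ 1], by linarith⟩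
    obtain ⟨T, hT, x, hx0, hx, hxT⟩ := exists_hasDerivAt_eq_neg_of_le_neg_mul_sq hcd hc hquad hx₀
    refine ⟨_, T, x, ?_, ?_, hT, hx0, hx, by simp [hxT]⟩ <;>
      rw [abs_neg, abs_of_pos (half_pos hm)]
    exacts [half_pos hm, by linarith [min_le_left δ 1]]
  · intro s t hs hst hin
    refine strictAntiOn_Icc_of_hasDerivAt_neg (fun u hu ↦ hx u (hs.trans hu.1)) (fun u hu ↦ ?_)
      ⟨le_rfl, hst.le⟩ ⟨hst.le, le_rfl⟩ hst
    obtain ⟨h1, h2⟩ := hin u hu.1 hu.2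
    nlinarith [hquad _ ⟨h1.le, h2.le⟩, mul_pos (neg_pos.2 h2) (neg_pos.2 h2)]
  · exact exists_notMem_Ioo_of_le_neg_mul_sq hc hquad hx ⟨h0l, h0r⟩
end

section
/- Let n > 1, let F(R) = R^n, and for R > 0 set φ(R) = √(3/2)·ln(n R^{n−1}). Then the conformal-frame potential satisfies (R·F'(R) − F(R)) / (2·F'(R)^2) = r(n)·e^{λ(n)·φ(R)}, where r(n) = (1/2)(n−1)·n^{−n/(n−1)} and λ(n) = −√(2/3)·(n−2)/(n−1). -/
/-!
Since `F'(R) = n R^{n-1}`, the potential is `(n-1) R^n / (2 n² R^{2n-2}) = (n-1)/(2n²) · R^{2-n}`.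
On the other side `√(2/3)·√(3/2) = 1`, so `e^{λφ} = (n R^{n-1})^{-(n-2)/(n-1)} = n^{-(n-2)/(n-1)} R^{2-n}`,
and the powers of `n` combine to `n^{-n/(n-1)} · n^{-(n-2)/(n-1)} = n^{-2}`.
-/

open Real

lemma sqrt_two_thirds_mul_sqrt_three_halves : √(2 / 3) * √(3 / 2) = 1 := by
  rw [← sqrt_mul (by norm_num)]
  norm_num

lemma power_law_potential {n R : ℝ} (hn : n ≠ 0) (hR : 0 < R) :
    (R * (n * R ^ (n - 1)) - R ^ n) / (2 * (n * R ^ (n - 1)) ^ 2)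
      = (n - 1) / (2 * n ^ 2) * R ^ (2 - n) := by
  have hRn : R * R ^ (n - 1) = R ^ n := by
    rw [← rpow_one_add' hR.le (by rwa [add_sub_cancel])]
    ring_nf
  have hsq : (R ^ (n - 1)) ^ 2 = R ^ n * R ^ (n - 2) := by
    rw [← rpow_mul_natCast hR.le, ← rpow_add hR]
    ring_nf
  have hinv : R ^ (2 - n) * R ^ (n - 2) = 1 := by
    rw [← rpow_add hR]
    norm_num
  rw [mul_left_comm, hRn, mul_pow, hsq, div_eq_iff (by positivity)]
  field_simp
  linear_combination -(n - 1) * hinv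

lemma rpow_neg_div_mul_exp_mul_log {n R : ℝ} (hn : 0 < n) (hn1 : n ≠ 1) (hR : 0 < R) :
    n ^ (-(n / (n - 1))) * exp (-(n - 2) / (n - 1) * log (n * R ^ (n - 1)))
      = R ^ (2 - n) / n ^ 2 := by
  have hsub : n - 1 ≠ 0 := sub_ne_zero.mpr hn1
  have hRpos : 0 < R ^ (n - 1) := rpow_pos_of_pos hR _
  rw [mul_comm _ (log _), ← rpow_def_of_pos (by positivity), mul_rpow hn.le hRpos.le,
    ← rpow_mul hR.le, ← mul_assoc, ← rpow_add hn,
    show -(n / (n - 1)) + -(n - 2) / (n - 1) = -2 by field_simp; ring,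
    show (n - 1) * (-(n - 2) / (n - 1)) = 2 - n by field_simp; ring,
    rpow_neg hn.le, rpow_two]
  ring

/-- For `F(R) = R^n` gravity with `n > 1`, setting `φ(R) = √(3/2)·ln(n R^{n−1})` for
`R > 0`, one has `F'(R) = n R^{n−1}`, and the conformal-frame potential satisfies
`(R F'(R) − F(R)) / (2 F'(R)²) = r(n) e^{λ(n) φ(R)}` with
`r(n) = (1/2)(n−1) n^{−n/(n−1)}` and `λ(n) = −√(2/3)(n−2)/(n−1)`. -/
theorem stmt_18
    (n : ℝ) (hn : 1 < n)
    (F : ℝ → ℝ) (hF : ∀ R : ℝ, F R = R ^ n) :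
    ∀ R : ℝ, 0 < R →
      deriv F R = n * R ^ (n - 1) ∧
      (R * deriv F R - F R) / (2 * (deriv F R)^2)
        = ((1/2) * (n - 1) * n ^ (-(n / (n - 1))))
          * Real.exp ((-(Real.sqrt (2/3)) * (n - 2) / (n - 1))
              * (Real.sqrt (3/2) * Real.log (n * R ^ (n - 1)))) := by
  intro R hR
  have hn0 : 0 < n := one_pos.trans hn
  have hderiv : deriv F R = n * R ^ (n - 1) := by
    rw [show F = fun R => R ^ n from funext hF, Real.deriv_rpow_const]
  have hexponent : -√(2 / 3) * (n - 2) / (n - 1) * (√(3 / 2) * log (n * R ^ (n - 1)))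
      = -(n - 2) / (n - 1) * log (n * R ^ (n - 1)) := by
    linear_combination (-(n - 2) / (n - 1) * log (n * R ^ (n - 1)))
      * sqrt_two_thirds_mul_sqrt_three_halves
  refine ⟨hderiv, ?_⟩
  rw [hderiv, hF, power_law_potential hn0.ne' hR, hexponent, mul_assoc,
    rpow_neg_div_mul_exp_mul_log hn0 hn.ne' hR]
  field_simp
end
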